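/- arXiv:2011.07299 — 8 statements merged into one kernel-verified Lean document; each statement's English description precedes it below -/
import Mathlib

section
/- Let (G_i, φ_i)_{i∈ℕ} be an inverse sequence of graph covers, with inverse limit vertex set V_G and edge relation E_G. Then E_G is the graph of a function: for every x ∈ V_G there exists a unique y ∈ V_G with (x, y) ∈ E_G. -/
/-- An inverse sequence of graph covers: graphs `G_i = (V i, E i)` with finite vertex
sets, connecting maps `φ i : V (i+1) → V i` which are +directional edge-surjective
graph homomorphisms between edge-surjective graphs. -/
structure GraphCoverSeq : Type 1 where
  V : ℕ → Type
  fintype : ∀ i, Fintype (V i)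
  E : ∀ i, V i → V i → Prop
  φ : ∀ i, V (i + 1) → V i
  graph_edge_surj_in : ∀ i, ∀ v : V i, ∃ u, E i u v
  graph_edge_surj_out : ∀ i, ∀ v : V i, ∃ w, E i v w
  hom : ∀ i, ∀ u v : V (i + 1), E (i + 1) u v → E i (φ i u) (φ i v)
  edge_surj : ∀ i, ∀ u v : V i, E i u v →
    ∃ a b : V (i + 1), E (i + 1) a b ∧ φ i a = u ∧ φ i b = v
  pos_directional : ∀ i, ∀ u v w : V (i + 1), E (i + 1) u v → E (i + 1) u w → φ i v = φ i w

/-- The inverse limit vertex set `V_G`. -/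
def GCLimit (S : GraphCoverSeq) : Type :=
  {x : ∀ i, S.V i // ∀ i, x i = S.φ i (x (i + 1))}

/-- The inverse limit edge relation `E_G`. -/
def GCLimit.EG {S : GraphCoverSeq} (x y : GCLimit S) : Prop :=
  ∀ i, S.E i (x.1 i) (y.1 i)

/-- For an inverse sequence of graph covers, `E_G` is the graph of a function:
every `x ∈ V_G` has a unique `y ∈ V_G` with `(x, y) ∈ E_G`. -/
theorem EG_functional (S : GraphCoverSeq) (x : GCLimit S) :
    ∃! y : GCLimit S, GCLimit.EG x y := by
  classical
  set w : ∀ i, S.V (i + 1) :=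
    fun i => Classical.choose (S.graph_edge_surj_out (i + 1) (x.1 (i + 1))) with hwdef
  have hw : ∀ i, S.E (i + 1) (x.1 (i + 1)) (w i) :=
    fun i => Classical.choose_spec (S.graph_edge_surj_out (i + 1) (x.1 (i + 1)))
  refine ⟨⟨fun i => S.φ i (w i), ?_⟩, ?_, ?_⟩
  · intro i
    have h2 : S.E (i + 1) (x.1 (i + 1)) (S.φ (i + 1) (w (i + 1))) := by
      have := S.hom (i + 1) _ _ (hw (i + 1))
      rwa [← x.2 (i + 1)] at this
    exact S.pos_directional i _ _ _ (hw i) h2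
  · intro i
    have := S.hom i _ _ (hw i)
    rwa [← x.2 i] at this
  · intro z hz
    apply Subtype.ext; funext i
    have := S.pos_directional i _ _ _ (hz (i + 1)) (hw i)
    rw [z.2 i, this]
end

section
/- Let (G_i, φ_i)_{i∈ℕ} be an inverse sequence of graph covers, with inverse limit vertex set V_G and edge relation E_G. Then the function V_G → V_G induced by E_G (sending each x ∈ V_G to the unique y ∈ V_G with (x, y) ∈ E_G) is continuous with respect to the subspace topology of the product of the discrete spaces V_i. -/
/-- `V_G` as a subspace of the product of the discrete (finite) spaces `V i`. -/
instance (S : GraphCoverSeq) : TopologicalSpace (GCLimit S) :=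
  letI : ∀ i, TopologicalSpace (S.V i) := fun _ => ⊥
  inferInstanceAs (TopologicalSpace {x : ∀ i, S.V i // ∀ i, x i = S.φ i (x (i + 1))})

/-- The function `V_G → V_G` induced by `E_G` (sending each `x` to the unique `y`
with `(x, y) ∈ E_G`) is continuous. -/
theorem EG_map_continuous (S : GraphCoverSeq) (g : GCLimit S → GCLimit S)
    (hg : ∀ x, GCLimit.EG x (g x)) : Continuous g := by
  letI : ∀ i, TopologicalSpace (S.V i) := fun _ => ⊥
  haveI : ∀ i, DiscreteTopology (S.V i) := fun i => ⟨rfl⟩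
  apply Continuous.subtype_mk
  apply continuous_pi
  intro i
  have key : (fun x : GCLimit S => (g x).1 i) =
      (fun x : GCLimit S =>
        S.φ i (Classical.choose (S.graph_edge_surj_out (i + 1) (x.1 (i + 1))))) := by
    funext x
    rw [(g x).2 i]
    exact S.pos_directional i (x.1 (i + 1)) _ _ (hg x (i + 1))
      (Classical.choose_spec (S.graph_edge_surj_out (i + 1) (x.1 (i + 1))))
  rw [key]
  show Continuous ((fun v => S.φ i (Classical.choose (S.graph_edge_surj_out (i + 1) v))) ∘
    (fun x : GCLimit S => x.1 (i + 1)))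
  exact continuous_of_discreteTopology.comp
    ((continuous_apply (i + 1)).comp continuous_subtype_val)
end

section
/- Let (X, f) be a surjective zero-dimensional dynamical system, i.e., X is a nonempty compact metric space with a basis of clopen sets and f : X → X is a continuous surjection. Then there exists a sequence {U_i}_{i∈ℕ} of finite partitions of X into nonempty clopen sets with mesh(U_i) → 0 as i → ∞, such that each element of U_i is contained in a (necessarily unique) element of U_{i−1}; letting φ_i : U_i → U_{i−1} be the inclusion-induced maps and letting each U_i carry the edge relation f^{U_i} = {(U, V) ∈ U_i × U_i : f(U) ∩ V ≠ ∅}, the sequence ((U_i, f^{U_i}), φ_i) is an inverse sequence of graph covers whose inverse limit system (V_G, E_G) is topologically conjugate to (X, f). -/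
/-!
The partitions are the fiber sets of discrete quotients of `X`. Finitely many clopen sets of
small diameter cover `X`, and the atoms they generate form a discrete quotient `S n` of mesh at
most `1 / (n + 1)`. Put `Q 0 = S 0` and `Q (n + 1) = Q n ⊓ f⁻¹(Q n) ⊓ S (n + 1)`. Refining
`f⁻¹(Q n)` means that `f` maps each fiber of `Q (n + 1)` into a single fiber of `Q n`, which is
exactly +directionality. Sending a point to the thread of its fibers is continuous because the
fibers are clopen, injective because the mesh tends to `0`, and surjective by compactness of
nested intersections; as `X` is compact, it is a homeomorphism onto the inverse limit.
-/

/-- The inverse limit of the sets of a sequence of partitions `𝒰 i`, along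
inclusion-induced maps `φ`. -/
def PartLimit {X : Type} (𝒰 : ℕ → Finset (Set X))
    (φ : ∀ i, {U : Set X // U ∈ 𝒰 (i + 1)} → {U : Set X // U ∈ 𝒰 i}) : Type :=
  {x : ∀ i, {U : Set X // U ∈ 𝒰 i} // ∀ i, x i = φ i (x (i + 1))}

/-- The inverse limit as a subspace of the product of the discrete finite spaces. -/
instance {X : Type} (𝒰 : ℕ → Finset (Set X))
    (φ : ∀ i, {U : Set X // U ∈ 𝒰 (i + 1)} → {U : Set X // U ∈ 𝒰 i}) :
    TopologicalSpace (PartLimit 𝒰 φ) :=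
  letI : ∀ i, TopologicalSpace {U : Set X // U ∈ 𝒰 i} := fun _ => ⊥
  inferInstanceAs
    (TopologicalSpace {x : ∀ i, {U : Set X // U ∈ 𝒰 i} // ∀ i, x i = φ i (x (i + 1))})

open Set Function Metric Topology

namespace PartLimit

variable {X : Type} {𝒰 : ℕ → Finset (Set X)}
  {φ : ∀ i, {U : Set X // U ∈ 𝒰 (i + 1)} → {U : Set X // U ∈ 𝒰 i}}

instance : T2Space (PartLimit 𝒰 φ) :=
  letI : ∀ i, TopologicalSpace {U : Set X // U ∈ 𝒰 i} := fun _ => ⊥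
  haveI : ∀ i, DiscreteTopology {U : Set X // U ∈ 𝒰 i} := fun _ => ⟨rfl⟩
  inferInstanceAs
    (T2Space {x : ∀ i, {U : Set X // U ∈ 𝒰 i} // ∀ i, x i = φ i (x (i + 1))})

lemma continuous_mk {Y : Type*} [TopologicalSpace Y] {g : Y → ∀ i, {U : Set X // U ∈ 𝒰 i}}
    (hg : ∀ y i, g y i = φ i (g y (i + 1))) (hopen : ∀ i U, IsOpen {y | g y i = U}) :
    Continuous (Y := PartLimit 𝒰 φ) fun y => ⟨g y, hg y⟩ := by
  let : ∀ i, TopologicalSpace {U : Set X // U ∈ 𝒰 i} := fun _ => ⊥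
  have : ∀ i, DiscreteTopology {U : Set X // U ∈ 𝒰 i} := fun _ => ⟨rfl⟩
  exact (continuous_pi fun i => continuous_discrete_rng.2 fun U => hopen i U).subtype_mk _

end PartLimit

namespace DiscreteQuotient

section Fibers

variable {X : Type*} [TopologicalSpace X] {S T : DiscreteQuotient X}

def fiber (S : DiscreteQuotient X) (x : X) : Set X := S.proj ⁻¹' {S.proj x}

lemma mem_fiber {x y : X} : y ∈ S.fiber x ↔ S.proj y = S.proj x := Iff.rfl

lemma mem_fiber_self (S : DiscreteQuotient X) (x : X) : x ∈ S.fiber x := rfl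

lemma fiber_eq_of_mem {x y : X} (h : y ∈ S.fiber x) : S.fiber y = S.fiber x := by
  rw [fiber, mem_fiber.1 h, fiber]

lemma isClopen_fiber (S : DiscreteQuotient X) (x : X) : IsClopen (S.fiber x) :=
  S.isClopen_preimage _

lemma fiber_subset_of_le (h : S ≤ T) (x : X) : S.fiber x ⊆ T.fiber x := by
  simpa only [fiber, ofLE_proj] using fiber_subset_ofLE h (S.proj x)

lemma image_fiber_subset {Y : Type*} [TopologicalSpace Y] {T : DiscreteQuotient Y} {f : C(X, Y)}
    (h : S ≤ T.comap f) (x : X) : f '' S.fiber x ⊆ T.fiber (f x) := by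
  rintro _ ⟨y, hy, rfl⟩
  rw [mem_fiber, ← map_proj h, ← map_proj h, mem_fiber.1 hy]

lemma exists_fiber_subset [CompactSpace X] {B : Set (Set X)}
    (hB : TopologicalSpace.IsTopologicalBasis B) (hBc : ∀ V ∈ B, IsClopen V)
    {U : X → Set X} (hU : ∀ x, U x ∈ 𝓝 x) :
    ∃ S : DiscreteQuotient X, ∀ x, ∃ y, S.fiber x ⊆ U y := by
  choose V hVB hxV hVU using fun x => hB.mem_nhds_iff.1 (hU x)
  obtain ⟨t, ht⟩ := isCompact_univ.elim_finite_subcover V (fun x => (hBc _ (hVB x)).isOpen)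
    fun x _ => mem_iUnion.2 ⟨x, hxV x⟩
  refine ⟨t.inf fun y => ofIsClopen (hBc _ (hVB y)), fun x => ?_⟩
  obtain ⟨y, hyt, hxy⟩ := mem_iUnion₂.1 (ht (mem_univ x))
  refine ⟨y, fun z hz => hVU y ?_⟩
  have hxz := fiber_subset_of_le (Finset.inf_le hyt) x hz
  exact (Quotient.exact' hxz.symm).1 hxy

lemma exists_fiber_diam_le {X : Type*} [MetricSpace X] [CompactSpace X] {B : Set (Set X)}
    (hB : TopologicalSpace.IsTopologicalBasis B) (hBc : ∀ V ∈ B, IsClopen V) {ε : ℝ}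
    (hε : 0 < ε) : ∃ S : DiscreteQuotient X, ∀ x, diam (S.fiber x) ≤ ε := by
  obtain ⟨S, hS⟩ := exists_fiber_subset hB hBc fun x => ball_mem_nhds x (half_pos hε)
  refine ⟨S, fun x => ?_⟩
  obtain ⟨y, hy⟩ := hS x
  calc diam (S.fiber x) ≤ diam (ball y (ε / 2)) := diam_mono hy isBounded_ball
    _ ≤ 2 * (ε / 2) := diam_ball (half_pos hε).le
    _ = ε := by ring

end Fibers

section FiberPartition

variable {X : Type*} [TopologicalSpace X] [CompactSpace X] {S T : DiscreteQuotient X}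

noncomputable def fibers (S : DiscreteQuotient X) : Finset (Set X) :=
  ((Set.finite_range fun q : S => S.proj ⁻¹' {q}).subset
    (range_subset_iff.2 fun x => mem_range_self (S.proj x))).toFinset

lemma mem_fibers {U : Set X} : U ∈ S.fibers ↔ ∃ x, S.fiber x = U := by
  simp only [fibers, Finite.mem_toFinset, mem_range, fiber]

lemma fiber_mem_fibers (S : DiscreteQuotient X) (x : X) : S.fiber x ∈ S.fibers :=
  mem_fibers.2 ⟨x, rfl⟩

lemma eq_fiber_of_mem_fibers {U : Set X} (hU : U ∈ S.fibers) {x : X} (hx : x ∈ U) :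
    U = S.fiber x := by
  obtain ⟨y, rfl⟩ := mem_fibers.1 hU
  exact (fiber_eq_of_mem hx).symm

lemma isClopen_of_mem_fibers {U : Set X} (hU : U ∈ S.fibers) : IsClopen U := by
  obtain ⟨x, rfl⟩ := mem_fibers.1 hU
  exact S.isClopen_fiber x

lemma nonempty_of_mem_fibers {U : Set X} (hU : U ∈ S.fibers) : U.Nonempty := by
  obtain ⟨x, rfl⟩ := mem_fibers.1 hU
  exact ⟨x, S.mem_fiber_self x⟩

lemma sUnion_fibers (S : DiscreteQuotient X) : ⋃₀ (S.fibers : Set (Set X)) = univ :=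
  eq_univ_of_forall fun x => ⟨S.fiber x, S.fiber_mem_fibers x, S.mem_fiber_self x⟩

lemma pairwiseDisjoint_fibers (S : DiscreteQuotient X) :
    (S.fibers : Set (Set X)).PairwiseDisjoint id := by
  intro U hU V hV hUV
  refine disjoint_left.2 fun x hxU hxV => hUV ?_
  rw [eq_fiber_of_mem_fibers hU hxU, eq_fiber_of_mem_fibers hV hxV]

def toFibers (S : DiscreteQuotient X) (x : X) : S.fibers := ⟨S.fiber x, S.fiber_mem_fibers x⟩

lemma toFibers_eq_iff {x : X} {U : S.fibers} : S.toFibers x = U ↔ x ∈ U.1 := by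
  refine ⟨fun h => h ▸ S.mem_fiber_self x, fun hx => Subtype.ext ?_⟩
  exact (eq_fiber_of_mem_fibers U.2 hx).symm

/-- The `T`-fiber through some point of `U`; when `S ≤ T` it is the one containing `U`. -/
noncomputable def fiberContaining (T : DiscreteQuotient X) (U : S.fibers) : T.fibers :=
  T.toFibers (nonempty_of_mem_fibers U.2).some

lemma fiberContaining_eq (h : S ≤ T) {U : S.fibers} {x : X} (hx : x ∈ U.1) :
    fiberContaining T U = T.toFibers x := by
  have hU := eq_fiber_of_mem_fibers U.2 (nonempty_of_mem_fibers U.2).some_mem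
  refine Subtype.ext (fiber_eq_of_mem (fiber_subset_of_le h _ ?_)).symm
  exact hU ▸ hx

lemma fiberContaining_toFibers (h : S ≤ T) (x : X) :
    fiberContaining T (S.toFibers x) = T.toFibers x :=
  fiberContaining_eq h (S.mem_fiber_self x)

lemma subset_fiberContaining (h : S ≤ T) (U : S.fibers) : U.1 ⊆ (fiberContaining T U).1 := by
  intro x hx
  rw [fiberContaining_eq h hx]
  exact T.mem_fiber_self x

lemma exists_edge_to {f : X → X} (hf : Surjective f) (v : S.fibers) :
    ∃ u : S.fibers, (f '' u.1 ∩ v.1).Nonempty := by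
  obtain ⟨y, hy⟩ := nonempty_of_mem_fibers v.2
  obtain ⟨x, rfl⟩ := hf y
  exact ⟨S.toFibers x, f x, mem_image_of_mem f (S.mem_fiber_self x), hy⟩

lemma exists_edge_from (f : X → X) (u : S.fibers) :
    ∃ v : S.fibers, (f '' u.1 ∩ v.1).Nonempty := by
  obtain ⟨x, hx⟩ := nonempty_of_mem_fibers u.2
  exact ⟨S.toFibers (f x), f x, mem_image_of_mem f hx, S.mem_fiber_self (f x)⟩

lemma exists_edge_lift {f : X → X} (h : S ≤ T) {u v : T.fibers}
    (huv : (f '' u.1 ∩ v.1).Nonempty) :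
    ∃ a b : S.fibers, (f '' a.1 ∩ b.1).Nonempty ∧
      fiberContaining T a = u ∧ fiberContaining T b = v := by
  obtain ⟨_, ⟨x, hxu, rfl⟩, hxv⟩ := huv
  refine ⟨S.toFibers x, S.toFibers (f x),
    ⟨f x, mem_image_of_mem f (S.mem_fiber_self x), S.mem_fiber_self (f x)⟩, ?_, ?_⟩
  · exact (fiberContaining_toFibers h x).trans (toFibers_eq_iff.2 hxu)
  · exact (fiberContaining_toFibers h (f x)).trans (toFibers_eq_iff.2 hxv)

lemma fiberContaining_eq_of_edges {f : C(X, X)} (h : S ≤ T) (hf : S ≤ T.comap f)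
    {u v w : S.fibers} (huv : (f '' u.1 ∩ v.1).Nonempty) (huw : (f '' u.1 ∩ w.1).Nonempty) :
    fiberContaining T v = fiberContaining T w := by
  obtain ⟨_, ⟨x, hxu, rfl⟩, hxv⟩ := huv
  obtain ⟨_, ⟨y, hyu, rfl⟩, hyw⟩ := huw
  have hxy : x ∈ S.fiber y := eq_fiber_of_mem_fibers u.2 hyu ▸ hxu
  rw [fiberContaining_eq h hxv, fiberContaining_eq h hyw]
  exact toFibers_eq_iff.2 (image_fiber_subset hf y (mem_image_of_mem f hxy))

end FiberPartition

section Refinement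

variable {X : Type*} [TopologicalSpace X] (f : C(X, X)) (S : ℕ → DiscreteQuotient X)

def dynamicalRefinement : ℕ → DiscreteQuotient X
  | 0 => S 0
  | n + 1 => dynamicalRefinement n ⊓ (dynamicalRefinement n).comap f ⊓ S (n + 1)

lemma dynamicalRefinement_le : ∀ n, dynamicalRefinement f S n ≤ S n
  | 0 => le_rfl
  | _ + 1 => inf_le_right

lemma dynamicalRefinement_succ_le (n : ℕ) :
    dynamicalRefinement f S (n + 1) ≤ dynamicalRefinement f S n :=
  inf_le_left.trans inf_le_left

lemma dynamicalRefinement_succ_le_comap (n : ℕ) :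
    dynamicalRefinement f S (n + 1) ≤ (dynamicalRefinement f S n).comap f :=
  inf_le_left.trans inf_le_right

end Refinement

section InverseLimit

variable {X : Type} [TopologicalSpace X] [CompactSpace X] {Q : ℕ → DiscreteQuotient X}
  (hQ : ∀ n, Q (n + 1) ≤ Q n)

def toPartLimit (x : X) : PartLimit (fun n => (Q n).fibers) (fun n => fiberContaining (Q n)) :=
  ⟨fun n => (Q n).toFibers x, fun n => (fiberContaining_toFibers (hQ n) x).symm⟩

lemma continuous_toPartLimit : Continuous (toPartLimit hQ) :=
  PartLimit.continuous_mk _ fun n U => by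
    simp_rw [toFibers_eq_iff, ofPred_mem_eq]
    exact (isClopen_of_mem_fibers U.2).isOpen

lemma surjective_toPartLimit : Surjective (toPartLimit hQ) := by
  rintro ⟨z, hz⟩
  have hanti : ∀ n, (z (n + 1)).1 ⊆ (z n).1 := fun n => by
    rw [hz n]
    exact subset_fiberContaining (hQ n) _
  have hclosed : ∀ n, IsClosed (z n).1 := fun n => (isClopen_of_mem_fibers (z n).2).isClosed
  obtain ⟨x, hx⟩ := IsCompact.nonempty_iInter_of_sequence_nonempty_isCompact_isClosed _ hanti
    (fun n => nonempty_of_mem_fibers (z n).2) (hclosed 0).isCompact hclosed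
  exact ⟨x, Subtype.ext <| funext fun n => toFibers_eq_iff.2 (mem_iInter.1 hx n)⟩

lemma injective_toPartLimit (hsep : ∀ x y, (∀ n, y ∈ (Q n).fiber x) → x = y) :
    Injective (toPartLimit hQ) := fun x y hxy =>
  hsep x y fun n => toFibers_eq_iff.1 (congrArg (fun z => z.1 n) hxy).symm

lemma isHomeomorph_toPartLimit (hsep : ∀ x y, (∀ n, y ∈ (Q n).fiber x) → x = y) :
    IsHomeomorph (toPartLimit hQ) :=
  isHomeomorph_iff_continuous_bijective.2
    ⟨continuous_toPartLimit hQ, injective_toPartLimit hQ hsep, surjective_toPartLimit hQ⟩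

end InverseLimit

section Mesh

variable {X : Type*} [MetricSpace X]

lemma diam_fiber_le_of_le [CompactSpace X] {S T : DiscreteQuotient X} (h : S ≤ T) (x : X) :
    diam (S.fiber x) ≤ diam (T.fiber x) :=
  diam_mono (fiber_subset_of_le h x) isBounded_of_compactSpace

lemma exists_forall_ge_diam_fiber_le {Q : ℕ → DiscreteQuotient X}
    (hQ : ∀ n x, diam ((Q n).fiber x) ≤ 1 / (n + 1)) :
    ∀ ε > 0, ∃ N, ∀ i ≥ N, ∀ x, diam ((Q i).fiber x) ≤ ε := fun ε hε => by
  obtain ⟨N, hN⟩ := exists_nat_one_div_lt hε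
  exact ⟨N, fun i hi x => ((hQ i x).trans (Nat.one_div_le_one_div hi)).trans hN.le⟩

lemma eq_of_forall_mem_fiber [CompactSpace X] {Q : ℕ → DiscreteQuotient X}
    (hmesh : ∀ ε > 0, ∃ n, ∀ x, diam ((Q n).fiber x) ≤ ε)
    {x y : X} (h : ∀ n, y ∈ (Q n).fiber x) : x = y :=
  eq_of_forall_dist_le fun ε hε => by
    obtain ⟨n, hn⟩ := hmesh ε hε
    exact (dist_le_diam_of_mem isBounded_of_compactSpace ((Q n).mem_fiber_self x) (h n)).trans
      (hn x)

end Mesh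

end DiscreteQuotient

open DiscreteQuotient

theorem zero_dim_conjugate_to_graph_cover_limit_general {X : Type} [MetricSpace X]
    [CompactSpace X]
    (hzero : ∃ B : Set (Set X), TopologicalSpace.IsTopologicalBasis B ∧ ∀ U ∈ B, IsClopen U)
    (f : X → X) (hf : Continuous f) (hsurj : Function.Surjective f) :
    ∃ 𝒰 : ℕ → Finset (Set X),
      -- partitions into nonempty clopen sets
      (∀ i, ∀ U ∈ 𝒰 i, IsClopen U ∧ U.Nonempty) ∧
      (∀ i, ⋃₀ ((𝒰 i : Set (Set X))) = Set.univ) ∧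
      (∀ i, ((𝒰 i : Set (Set X))).PairwiseDisjoint id) ∧
      -- mesh 𝒰 i → 0
      (∀ ε : ℝ, 0 < ε → ∃ N, ∀ i ≥ N, ∀ U ∈ 𝒰 i, Metric.diam U ≤ ε) ∧
      -- inclusion-induced connecting maps
      ∃ φ : ∀ i, {U : Set X // U ∈ 𝒰 (i + 1)} → {U : Set X // U ∈ 𝒰 i},
        (∀ i U, U.1 ⊆ (φ i U).1) ∧
        -- the graphs (𝒰 i, f^{𝒰 i}) are edge-surjective
        (∀ i, ∀ v : {U : Set X // U ∈ 𝒰 i}, ∃ u : {U : Set X // U ∈ 𝒰 i}, (f '' u.1 ∩ v.1).Nonempty) ∧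
        (∀ i, ∀ v : {U : Set X // U ∈ 𝒰 i}, ∃ w : {U : Set X // U ∈ 𝒰 i}, (f '' v.1 ∩ w.1).Nonempty) ∧
        -- φ i is a graph homomorphism
        (∀ i, ∀ u v : {U : Set X // U ∈ 𝒰 (i + 1)},
          (f '' u.1 ∩ v.1).Nonempty → (f '' (φ i u).1 ∩ (φ i v).1).Nonempty) ∧
        -- φ i is edge-surjective
        (∀ i, ∀ u v : {U : Set X // U ∈ 𝒰 i}, (f '' u.1 ∩ v.1).Nonempty →
          ∃ a b : {U : Set X // U ∈ 𝒰 (i + 1)},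
            (f '' a.1 ∩ b.1).Nonempty ∧ φ i a = u ∧ φ i b = v) ∧
        -- φ i is +directional
        (∀ i, ∀ u v w : {U : Set X // U ∈ 𝒰 (i + 1)},
          (f '' u.1 ∩ v.1).Nonempty → (f '' u.1 ∩ w.1).Nonempty → φ i v = φ i w) ∧
        -- the inverse limit system (V_G, E_G) is conjugate to (X, f):
        -- h is a homeomorphism and h(f x) is the E_G-image of h(x)
        ∃ h : X → PartLimit 𝒰 φ, IsHomeomorph h ∧
          ∀ x : X, ∀ i, (f '' ((h x).1 i).1 ∩ ((h (f x)).1 i).1).Nonempty := by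
  obtain ⟨B, hB, hBc⟩ := hzero
  choose S hS using fun n : ℕ => exists_fiber_diam_le hB hBc (Nat.one_div_pos_of_nat (n := n))
  set Q := dynamicalRefinement ⟨f, hf⟩ S
  have hQ := dynamicalRefinement_succ_le ⟨f, hf⟩ S
  have hmesh := exists_forall_ge_diam_fiber_le (Q := Q) fun n x =>
    (diam_fiber_le_of_le (dynamicalRefinement_le _ S n) x).trans (hS n x)
  refine ⟨fun n => (Q n).fibers, fun i U hU => ⟨isClopen_of_mem_fibers hU,
    nonempty_of_mem_fibers hU⟩, fun i => sUnion_fibers _, fun i => pairwiseDisjoint_fibers _,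
    fun ε hε => ?_, fun i => fiberContaining (Q i), fun i => subset_fiberContaining (hQ i),
    fun i => exists_edge_to hsurj, fun i => exists_edge_from f,
    fun i u v huv => huv.mono (inter_subset_inter (image_mono (subset_fiberContaining (hQ i) u))
      (subset_fiberContaining (hQ i) v)),
    fun i u v => exists_edge_lift (hQ i),
    fun i u v w => fiberContaining_eq_of_edges (f := ⟨f, hf⟩) (hQ i)
      (dynamicalRefinement_succ_le_comap _ S i),
    toPartLimit hQ, isHomeomorph_toPartLimit hQ fun x y => eq_of_forall_mem_fiber
      fun ε hε => (hmesh ε hε).imp fun N hN => hN N le_rfl,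
    fun x i => ⟨f x, mem_image_of_mem f ((Q i).mem_fiber_self x), (Q i).mem_fiber_self (f x)⟩⟩
  obtain ⟨N, hN⟩ := hmesh ε hε
  refine ⟨N, fun i hi U hU => ?_⟩
  obtain ⟨x, rfl⟩ := mem_fibers.1 hU
  exact hN i hi x

/-- **Theorem (Shimomura).** Let `(X, f)` be a surjective zero-dimensional dynamical
system. Then there is a sequence `𝒰 i` of finite partitions of `X` into nonempty
clopen sets with mesh tending to `0`, each refining the previous one, such that with
the edge relations `f^{𝒰 i} = {(U, V) : f(U) ∩ V ≠ ∅}` and the inclusion-induced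
connecting maps `φ`, the sequence is an inverse sequence of graph covers whose inverse
limit system is topologically conjugate to `(X, f)`. -/
theorem zero_dim_conjugate_to_graph_cover_limit {X : Type} [MetricSpace X]
    [CompactSpace X] [Nonempty X]
    (hzero : ∃ B : Set (Set X), TopologicalSpace.IsTopologicalBasis B ∧ ∀ U ∈ B, IsClopen U)
    (f : X → X) (hf : Continuous f) (hsurj : Function.Surjective f) :
    ∃ 𝒰 : ℕ → Finset (Set X),
      -- partitions into nonempty clopen sets
      (∀ i, ∀ U ∈ 𝒰 i, IsClopen U ∧ U.Nonempty) ∧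
      (∀ i, ⋃₀ ((𝒰 i : Set (Set X))) = Set.univ) ∧
      (∀ i, ((𝒰 i : Set (Set X))).PairwiseDisjoint id) ∧
      -- mesh 𝒰 i → 0
      (∀ ε : ℝ, 0 < ε → ∃ N, ∀ i ≥ N, ∀ U ∈ 𝒰 i, Metric.diam U ≤ ε) ∧
      -- inclusion-induced connecting maps
      ∃ φ : ∀ i, {U : Set X // U ∈ 𝒰 (i + 1)} → {U : Set X // U ∈ 𝒰 i},
        (∀ i U, U.1 ⊆ (φ i U).1) ∧
        -- the graphs (𝒰 i, f^{𝒰 i}) are edge-surjective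
        (∀ i, ∀ v : {U : Set X // U ∈ 𝒰 i}, ∃ u : {U : Set X // U ∈ 𝒰 i}, (f '' u.1 ∩ v.1).Nonempty) ∧
        (∀ i, ∀ v : {U : Set X // U ∈ 𝒰 i}, ∃ w : {U : Set X // U ∈ 𝒰 i}, (f '' v.1 ∩ w.1).Nonempty) ∧
        -- φ i is a graph homomorphism
        (∀ i, ∀ u v : {U : Set X // U ∈ 𝒰 (i + 1)},
          (f '' u.1 ∩ v.1).Nonempty → (f '' (φ i u).1 ∩ (φ i v).1).Nonempty) ∧
        -- φ i is edge-surjective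
        (∀ i, ∀ u v : {U : Set X // U ∈ 𝒰 i}, (f '' u.1 ∩ v.1).Nonempty →
          ∃ a b : {U : Set X // U ∈ 𝒰 (i + 1)},
            (f '' a.1 ∩ b.1).Nonempty ∧ φ i a = u ∧ φ i b = v) ∧
        -- φ i is +directional
        (∀ i, ∀ u v w : {U : Set X // U ∈ 𝒰 (i + 1)},
          (f '' u.1 ∩ v.1).Nonempty → (f '' u.1 ∩ w.1).Nonempty → φ i v = φ i w) ∧
        -- the inverse limit system (V_G, E_G) is conjugate to (X, f):
        -- h is a homeomorphism and h(f x) is the E_G-image of h(x)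
        ∃ h : X → PartLimit 𝒰 φ, IsHomeomorph h ∧
          ∀ x : X, ∀ i, (f '' ((h x).1 i).1 ∩ ((h (f x)).1 i).1).Nonempty :=
  zero_dim_conjugate_to_graph_cover_limit_general hzero f hf hsurj
end

section
/- A surjective dynamical system (X, f) (X a nonempty compact metric space, f : X → X a continuous surjection) is zero-dimensional if and only if it is topologically conjugate to the inverse limit system (V_G, E_G) of some inverse sequence of graph covers. -/
/-!
A clopen basis of a compact metric space can be thinned to a sequence `C 0, C 1, …` of clopen
sets separating points. Coding `x` at level `i` by its itinerary `(f^[k] x ∈ C j)_{j, k ≤ i}`, the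
realised codes, joined by an edge from the code of `x` to the code of `f x`, form an inverse
sequence of graph covers: the level-`i` code of `f x` is read off from the level-`(i + 1)` code of
`x`, which is +directionality, and surjectivity of `f` gives incoming edges. Since the codes separate
points and their fibres are clopen, compactness makes the coding map a homeomorphism onto the
inverse limit, conjugating `f` to the edge relation. Conversely, an inverse limit of finite discrete
spaces is totally disconnected, and a totally disconnected compact Hausdorff space has a clopen
basis.
-/

open Function Set TopologicalSpace

instance (S : GraphCoverSeq) : T2Space (GCLimit S) :=
  letI : ∀ i, TopologicalSpace (S.V i) := fun _ => ⊥
  haveI : ∀ i, DiscreteTopology (S.V i) := fun _ => ⟨rfl⟩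
  inferInstanceAs (T2Space {x : ∀ i, S.V i // ∀ i, x i = S.φ i (x (i + 1))})

instance (S : GraphCoverSeq) : TotallyDisconnectedSpace (GCLimit S) :=
  letI : ∀ i, TopologicalSpace (S.V i) := fun _ => ⊥
  haveI : ∀ i, DiscreteTopology (S.V i) := fun _ => ⟨rfl⟩
  inferInstanceAs (TotallyDisconnectedSpace {x : ∀ i, S.V i // ∀ i, x i = S.φ i (x (i + 1))})

theorem GCLimit.continuous_of_isLocallyConstant {Y : Type*} [TopologicalSpace Y]
    {S : GraphCoverSeq} {h : Y → GCLimit S} (hh : ∀ i, IsLocallyConstant fun y => (h y).1 i) :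
    Continuous h :=
  letI : ∀ i, TopologicalSpace (S.V i) := fun _ => ⊥
  haveI : ∀ i, DiscreteTopology (S.V i) := fun _ => ⟨rfl⟩
  continuous_induced_rng.2 (continuous_pi fun i => (hh i).continuous)

theorem exists_isClopen_basis_iff_totallyDisconnectedSpace {X : Type*} [TopologicalSpace X]
    [CompactSpace X] [T2Space X] :
    (∃ B : Set (Set X), IsTopologicalBasis B ∧ ∀ U ∈ B, IsClopen U) ↔
      TotallyDisconnectedSpace X := by
  refine ⟨fun ⟨B, hB, hBc⟩ => ?_, fun _ => ⟨_, isTopologicalBasis_isClopen, fun _ => id⟩⟩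
  have := totallySeparatedSpace_of_t0_of_basis_clopen
    (hB.of_isOpen_of_subset (fun _ hU => hU.isOpen) hBc)
  infer_instance

theorem exists_seq_isClopen_separating {X : Type*} [TopologicalSpace X] [CompactSpace X]
    [T2Space X] [TotallyDisconnectedSpace X] [SecondCountableTopology X] :
    ∃ C : ℕ → Set X, (∀ n, IsClopen (C n)) ∧ ∀ x y, (∀ n, x ∈ C n ↔ y ∈ C n) → x = y := by
  have := Clopens.countable_iff_secondCountable.mpr ‹SecondCountableTopology X›
  obtain ⟨C, hC⟩ := exists_surjective_nat (Clopens X)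
  refine ⟨fun n => C n, fun n => (C n).isClopen, fun x y hxy => ?_⟩
  by_contra hne
  obtain ⟨U, hU, hxU, hyU⟩ := exists_isClopen_of_totally_separated hne
  obtain ⟨n, hn⟩ := hC ⟨U, hU⟩
  have hxn : x ∈ (C n : Set X) := hn ▸ hxU
  have hyn : y ∈ (C n : Set X) := (hxy n).1 hxn
  rw [hn] at hyn
  exact hyU hyn

theorem IsClopen.isLocallyConstant_mem {X : Type*} [TopologicalSpace X] {U : Set X}
    (hU : IsClopen U) : IsLocallyConstant (· ∈ U) := by
  refine IsLocallyConstant.iff_isOpen_fiber.2 fun p => ?_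
  by_cases hp : p
  · simpa [hp] using hU.isOpen
  · convert hU.compl.isOpen using 1
    ext
    simp [hp]

section Coding

variable {X : Type} {α : ℕ → Type} [∀ i, Finite (α i)] (f : X → X) (c : ∀ i, X → α i)
  (r : ∀ i, α (i + 1) → α i) (hcr : ∀ i x, r i (c (i + 1) x) = c i x)
  (hshift : ∀ i x y, c (i + 1) x = c (i + 1) y → c i (f x) = c i (f y))
  (hsurj : Surjective f)

noncomputable def codingCoverSeq : GraphCoverSeq where
  V i := range (c i)
  fintype _ := Fintype.ofFinite _
  E i u v := ∃ x, rangeFactorization (c i) x = u ∧ rangeFactorization (c i) (f x) = v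
  φ i u := ⟨r i u, by obtain ⟨x, hx⟩ := u.2; exact ⟨x, by rw [← hx, hcr]⟩⟩
  graph_edge_surj_in := by
    rintro i ⟨_, x, rfl⟩
    obtain ⟨y, rfl⟩ := hsurj x
    exact ⟨_, y, rfl, rfl⟩
  graph_edge_surj_out := by
    rintro i ⟨_, x, rfl⟩
    exact ⟨_, x, rfl, rfl⟩
  hom := by
    rintro i _ _ ⟨x, rfl, rfl⟩
    exact ⟨x, Subtype.ext (hcr i x).symm, Subtype.ext (hcr i (f x)).symm⟩
  edge_surj := by
    rintro i _ _ ⟨x, rfl, rfl⟩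
    exact ⟨_, _, ⟨x, rfl, rfl⟩, Subtype.ext (hcr i x), Subtype.ext (hcr i (f x))⟩
  pos_directional := by
    rintro i _ _ _ ⟨x, rfl, rfl⟩ ⟨y, hxy, rfl⟩
    refine Subtype.ext ?_
    simp only [rangeFactorization, hcr]
    exact hshift i x y (congrArg Subtype.val hxy).symm

def codingMap (x : X) : GCLimit (codingCoverSeq f c r hcr hshift hsurj) :=
  ⟨fun i => rangeFactorization (c i) x, fun i => Subtype.ext (hcr i x).symm⟩

theorem codingMap_edge (x : X) :
    GCLimit.EG (codingMap f c r hcr hshift hsurj x) (codingMap f c r hcr hshift hsurj (f x)) :=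
  fun _ => ⟨x, rfl, rfl⟩

theorem codingMap_injective (hsep : ∀ x y, (∀ i, c i x = c i y) → x = y) :
    Injective (codingMap f c r hcr hshift hsurj) := fun x y hxy =>
  hsep x y fun i => congrArg Subtype.val (congrFun (congrArg Subtype.val hxy) i)

theorem codingMap_surjective [TopologicalSpace X] [CompactSpace X]
    (hc : ∀ i, IsLocallyConstant (c i)) : Surjective (codingMap f c r hcr hshift hsurj) := by
  intro y
  let K i := c i ⁻¹' {(y.1 i).1}
  have hK_succ : ∀ i, K (i + 1) ⊆ K i := by
    intro i x (hx : c (i + 1) x = _)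
    change c i x = _
    rw [← hcr, hx, y.2 i]
    rfl
  have hK_closed : ∀ i, IsClosed (K i) := fun i => (hc i).isClosed_fiber _
  obtain ⟨x, hx⟩ := IsCompact.nonempty_iInter_of_sequence_nonempty_isCompact_isClosed K hK_succ
    (fun i => (y.1 i).2) (hK_closed 0).isCompact hK_closed
  exact ⟨x, Subtype.ext (funext fun i => Subtype.ext (mem_iInter.1 hx i))⟩

theorem continuous_codingMap [TopologicalSpace X] (hc : ∀ i, IsLocallyConstant (c i)) :
    Continuous (codingMap f c r hcr hshift hsurj) :=
  GCLimit.continuous_of_isLocallyConstant fun i =>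
    (hc i).desc _ Subtype.val Subtype.val_injective

theorem isHomeomorph_codingMap [TopologicalSpace X] [CompactSpace X]
    (hc : ∀ i, IsLocallyConstant (c i)) (hsep : ∀ x y, (∀ i, c i x = c i y) → x = y) :
    IsHomeomorph (codingMap f c r hcr hshift hsurj) :=
  isHomeomorph_iff_continuous_bijective.2 ⟨continuous_codingMap f c r hcr hshift hsurj hc,
    codingMap_injective f c r hcr hshift hsurj hsep, codingMap_surjective f c r hcr hshift hsurj hc⟩

end Coding

theorem Function.Bijective.exists_semiconj_of_rel {X Y : Type*} {h : X → Y} (hh : Bijective h)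
    (f : X → X) (R : Y → Y → Prop) (hR : ∀ x, R (h x) (h (f x))) :
    ∃ g : Y → Y, (∀ y, R y (g y)) ∧ h ∘ f = g ∘ h := by
  let e := Equiv.ofBijective h hh
  refine ⟨e ∘ f ∘ e.symm, fun y => ?_, funext fun x => ?_⟩
  · obtain ⟨x, rfl⟩ := e.surjective y
    simpa [e] using hR x
  · simp [e]

section Itinerary

variable {X : Type} (f : X → X) (C : ℕ → Set X)

def itinerary (i : ℕ) (x : X) : Fin (i + 1) → Fin (i + 1) → Prop :=
  fun j k => f^[k] x ∈ C j

theorem itinerary_apply_eq_of_itinerary_succ_eq {i : ℕ} {x y : X}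
    (hxy : itinerary f C (i + 1) x = itinerary f C (i + 1) y) :
    itinerary f C i (f x) = itinerary f C i (f y) := by
  funext j k
  simpa [itinerary, iterate_succ_apply] using congrFun (congrFun hxy j.castSucc) k.succ

theorem eq_of_forall_itinerary_eq (hsep : ∀ x y, (∀ n, x ∈ C n ↔ y ∈ C n) → x = y) {x y : X}
    (hxy : ∀ i, itinerary f C i x = itinerary f C i y) : x = y :=
  hsep x y fun n => by simpa [itinerary] using congrFun (congrFun (hxy n) (Fin.last n)) 0

theorem isLocallyConstant_itinerary [TopologicalSpace X] (hf : Continuous f)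
    (hC : ∀ n, IsClopen (C n)) (i : ℕ) : IsLocallyConstant (itinerary f C i) :=
  (LocallyConstant.unflip fun j : Fin (i + 1) => LocallyConstant.unflip fun k : Fin (i + 1) =>
    ⟨fun x => f^[k] x ∈ C j, (hC j).isLocallyConstant_mem.comp_continuous (hf.iterate k)⟩).2

theorem exists_conj_graphCoverLimit_of_separating [TopologicalSpace X] [CompactSpace X]
    (hf : Continuous f) (hsurj : Surjective f) (hC : ∀ n, IsClopen (C n))
    (hsep : ∀ x y, (∀ n, x ∈ C n ↔ y ∈ C n) → x = y) :
    ∃ (S : GraphCoverSeq) (g : GCLimit S → GCLimit S) (h : X → GCLimit S),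
      (∀ x : GCLimit S, GCLimit.EG x (g x)) ∧ IsHomeomorph h ∧ h ∘ f = g ∘ h := by
  let restrict i (a : Fin (i + 2) → Fin (i + 2) → Prop) j k := a (Fin.castSucc j) (Fin.castSucc k)
  have hh := isHomeomorph_codingMap f (itinerary f C) restrict (fun _ _ => rfl)
    (fun _ _ _ => itinerary_apply_eq_of_itinerary_succ_eq f C) hsurj
    (isLocallyConstant_itinerary f C hf hC) (fun x y => eq_of_forall_itinerary_eq f C hsep)
  obtain ⟨g, hg, hfg⟩ := hh.bijective.exists_semiconj_of_rel f GCLimit.EG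
    (codingMap_edge f _ _ _ _ hsurj)
  exact ⟨_, g, _, hg, hh, hfg⟩

end Itinerary

theorem zero_dim_iff_conjugate_to_graph_cover_limit_general {X : Type} [MetricSpace X]
    [CompactSpace X] (f : X → X) (hf : Continuous f)
    (hsurj : Function.Surjective f) :
    (∃ B : Set (Set X), TopologicalSpace.IsTopologicalBasis B ∧ ∀ U ∈ B, IsClopen U) ↔
      ∃ (S : GraphCoverSeq) (g : GCLimit S → GCLimit S) (h : X → GCLimit S),
        (∀ x : GCLimit S, GCLimit.EG x (g x)) ∧ IsHomeomorph h ∧ h ∘ f = g ∘ h := by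
  rw [exists_isClopen_basis_iff_totallyDisconnectedSpace]
  constructor
  · intro _
    obtain ⟨C, hC, hsep⟩ := exists_seq_isClopen_separating (X := X)
    exact exists_conj_graphCoverLimit_of_separating f C hf hsurj hC hsep
  · rintro ⟨S, -, h, -, hh, -⟩
    exact (hh.homeomorph h).symm.totallyDisconnectedSpace

/-- **Theorem (Shimomura's characterisation).** A surjective dynamical system `(X, f)`
is zero-dimensional iff it is topologically conjugate to the inverse limit system
`(V_G, E_G)` of some inverse sequence of graph covers. -/
theorem zero_dim_iff_conjugate_to_graph_cover_limit {X : Type} [MetricSpace X]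
    [CompactSpace X] [Nonempty X] (f : X → X) (hf : Continuous f)
    (hsurj : Function.Surjective f) :
    (∃ B : Set (Set X), TopologicalSpace.IsTopologicalBasis B ∧ ∀ U ∈ B, IsClopen U) ↔
      ∃ (S : GraphCoverSeq) (g : GCLimit S → GCLimit S) (h : X → GCLimit S),
        (∀ x : GCLimit S, GCLimit.EG x (g x)) ∧ IsHomeomorph h ∧ h ∘ f = g ∘ h :=
  zero_dim_iff_conjugate_to_graph_cover_limit_general f hf hsurj
end

section
/- Let (G, F) be an inverse sequence of twinned graph homomorphisms, with inverse limit vertex set V_G and relation E_G. Then for every x ∈ V_G there exists y ∈ V_G with (x, y) ∈ E_G; that is, the set E_G x = {y ∈ V_G : (x, y) ∈ E_G} is nonempty. -/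
/-- An inverse sequence of twinned graph homomorphisms `(𝒢, ℱ)`: graphs
`G_i = (V i, EG i)` and `F_i = (V i, EF i)` on the same finite vertex sets, sharing
connecting maps `φ i : V (i+1) → V i`, satisfying conditions (DS0)–(DS3b). -/
structure TwinnedSeq : Type 1 where
  V : ℕ → Type
  fintype : ∀ i, Fintype (V i)
  EG : ∀ i, V i → V i → Prop
  EF : ∀ i, V i → V i → Prop
  φ : ∀ i, V (i + 1) → V i
  /-- (DS0) `G_0` has exactly one vertex. -/
  ds0_nonempty : Nonempty (V 0)
  ds0_subsingleton : ∀ v w : V 0, v = w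
  /-- (DS1) each `φ i` is an edge-surjective graph homomorphism for `𝒢`, and every
  vertex of every `G_i` has an outgoing edge. -/
  ds1_hom : ∀ i, ∀ u v : V (i + 1), EG (i + 1) u v → EG i (φ i u) (φ i v)
  ds1_edge_surj : ∀ i, ∀ u v : V i, EG i u v →
    ∃ a b : V (i + 1), EG (i + 1) a b ∧ φ i a = u ∧ φ i b = v
  ds1_out : ∀ i, ∀ v : V i, ∃ w, EG i v w
  /-- (DS2) each `φ i` is a graph homomorphism for `ℱ`, each `EF i` is symmetric and
  reflexive. -/
  ds2_hom : ∀ i, ∀ u v : V (i + 1), EF (i + 1) u v → EF i (φ i u) (φ i v)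
  ds2_symm : ∀ i, ∀ u v : V i, EF i u v → EF i v u
  ds2_refl : ∀ i, ∀ v : V i, EF i v v
  /-- (DS3) -/
  ds3 : ∀ i, ∀ a b a' b' : V (i + 1),
    EF (i + 1) a b → EG (i + 1) a a' → EG (i + 1) b b' → EF i (φ i a') (φ i b')
  /-- (DS3b) -/
  ds3b : ∀ i, ∀ a b c : V (i + 1), EF (i + 1) a b → EF (i + 1) b c → EF i (φ i a) (φ i c)

/-- The inverse limit vertex set `V_G`. -/
def TwLimit (S : TwinnedSeq) : Type :=
  {x : ∀ i, S.V i // ∀ i, x i = S.φ i (x (i + 1))}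

/-- `V_G` as a subspace of the product of the discrete (finite) spaces `V i`. -/
instance (S : TwinnedSeq) : TopologicalSpace (TwLimit S) :=
  letI : ∀ i, TopologicalSpace (S.V i) := fun _ => ⊥
  inferInstanceAs (TopologicalSpace {x : ∀ i, S.V i // ∀ i, x i = S.φ i (x (i + 1))})

/-- The inverse limit relation `E_G`. -/
def limEG (S : TwinnedSeq) (x y : TwLimit S) : Prop :=
  ∀ i, S.EG i (x.1 i) (y.1 i)

/-- The inverse limit relation `E_F`. -/
def limEF (S : TwinnedSeq) (x y : TwLimit S) : Prop :=
  ∀ i, S.EF i (x.1 i) (y.1 i)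

/-! The successors of `x n` in `G n` form a finite set, nonempty since every vertex has an
outgoing edge, and `φ n` maps successors of `x (n + 1)` to successors of `x n` because it is a
homomorphism. Kőnig's lemma picks a compatible thread through these sets, which is a successor
of `x` in the inverse limit. -/

open CategoryTheory in
theorem exists_seq_map_succ_eq_of_finite {X : ℕ → Type*} [∀ n, Finite (X n)]
    [∀ n, Nonempty (X n)] (f : ∀ n, X (n + 1) → X n) :
    ∃ s : ∀ n, X n, ∀ n, f n (s (n + 1)) = s n := by
  let F : ℕᵒᵖ ⥤ Type _ := Functor.ofOpSequence fun n => TypeCat.ofHom (f n)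
  have : ∀ j, Finite (F.obj j) := fun j => inferInstanceAs (Finite (X j.unop))
  have : ∀ j, Nonempty (F.obj j) := fun j => inferInstanceAs (Nonempty (X j.unop))
  obtain ⟨s, hs⟩ := nonempty_sections_of_finite_inverse_system F
  refine ⟨fun n => s (Opposite.op n), fun n => ?_⟩
  have h := hs (homOfLE (Nat.le_add_right n 1)).op
  rwa [Functor.ofOpSequence_map_homOfLE_succ] at h

/-- For an inverse sequence of twinned graph homomorphisms, every `x ∈ V_G` has an
`E_G`-successor: the set `E_G x = {y ∈ V_G : (x, y) ∈ E_G}` is nonempty. -/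
theorem limEG_successor_nonempty (S : TwinnedSeq) (x : TwLimit S) :
    ∃ y : TwLimit S, limEG S x y := by
  have := S.fintype
  let Succ n := {w : S.V n // S.EG n (x.1 n) w}
  have : ∀ n, Nonempty (Succ n) := fun n =>
    let ⟨w, hw⟩ := S.ds1_out n (x.1 n)
    ⟨⟨w, hw⟩⟩
  obtain ⟨s, hs⟩ := exists_seq_map_succ_eq_of_finite (X := Succ) fun n w =>
    ⟨S.φ n w.1, x.2 n ▸ S.ds1_hom n _ _ w.2⟩
  exact ⟨⟨fun n => (s n).1, fun n => congrArg Subtype.val (hs n).symm⟩, fun n => (s n).2⟩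
end

section
/- Let (G, F) be an inverse sequence of twinned graph homomorphisms, with inverse limit vertex set V_G and relations E_G, E_F, where E_F is an equivalence relation on V_G. Let Y = V_G / E_F carry the quotient topology and let π : V_G → Y be the quotient map. Then Y is a compact Hausdorff space and there exists a unique continuous map T : Y → Y such that T(π(x)) = π(y) whenever (x, y) ∈ E_G; that is, (Y, T) is a dynamical system. -/
/-!
`V_G` is a closed subset of a product of finite discrete spaces, hence compact Hausdorff, and
`E_F`, `E_G` are closed in `V_G × V_G` because they are defined levelwise. On a compact space,
the set of points related by a closed relation `R` to a closed set `C` is closed, being a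
projection of a closed subset of the product. For `R = E_F` this makes `π` a closed map, and a
closed continuous surjection passes the T1 property and normality of `V_G` on to `Y`. For
`R = E_G` it shows that `π ∘ g` is continuous for any choice `g` of `E_G`-successors (which exist
by König's lemma and (DS1)); by (DS3), `π ∘ g` is constant on `E_F`-classes, so it descends to
`T`, which is unique because every point of `V_G` has an `E_G`-successor.
-/

open Function Set Topology CategoryTheory

section InverseSequence

universe u

theorem exists_seq_compatible_of_finite {X : ℕ → Type u} [∀ n, Finite (X n)]
    [∀ n, Nonempty (X n)] (f : ∀ n, X (n + 1) → X n) :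
    ∃ x : ∀ n, X n, ∀ n, f n (x (n + 1)) = x n := by
  let F : ℕᵒᵖ ⥤ Type u := Functor.ofOpSequence fun n => TypeCat.ofHom (f n)
  have : ∀ j : ℕᵒᵖ, Finite (F.obj j) := fun j => inferInstanceAs (Finite (X j.unop))
  have : ∀ j : ℕᵒᵖ, Nonempty (F.obj j) := fun j => inferInstanceAs (Nonempty (X j.unop))
  obtain ⟨x, hx⟩ := nonempty_sections_of_finite_inverse_system F
  refine ⟨fun n => x ⟨n⟩, fun n => ?_⟩
  have h := hx (homOfLE (Nat.le_add_right n 1)).op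
  rwa [Functor.ofOpSequence_map_homOfLE_succ] at h

end InverseSequence

section QuotientTopology

variable {X Y : Type*} [TopologicalSpace X] [TopologicalSpace Y]

theorem IsClosedMap.t1Space {f : X → Y} (hf : IsClosedMap f) (hsurj : Surjective f)
    [T1Space X] : T1Space Y where
  t1 y := by
    obtain ⟨x, rfl⟩ := hsurj y
    simpa using hf _ (isClosed_singleton (x := x))

theorem IsClosedMap.normalSpace {f : X → Y} (hf : IsClosedMap f) (hcont : Continuous f)
    (hsurj : Surjective f) [NormalSpace X] : NormalSpace Y where
  normal s t hs ht hst := by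
    obtain ⟨U, V, hU, hV, hsU, htV, hUV⟩ := NormalSpace.normal _ _ (hs.preimage hcont)
      (ht.preimage hcont) (hst.preimage f)
    -- `(f '' Uᶜ)ᶜ` is the largest set whose preimage lies in `U`
    have preimage_subset {W : Set X} : f ⁻¹' (f '' Wᶜ)ᶜ ⊆ W := fun x hx => by
      by_contra hxW
      exact hx ⟨x, hxW, rfl⟩
    have subset_compl {W : Set X} {r : Set Y} (h : f ⁻¹' r ⊆ W) : r ⊆ (f '' Wᶜ)ᶜ := by
      rintro _ hy ⟨x, hxW, rfl⟩
      exact hxW (h hy)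
    refine ⟨(f '' Uᶜ)ᶜ, (f '' Vᶜ)ᶜ, (hf _ hU.isClosed_compl).isOpen_compl,
      (hf _ hV.isClosed_compl).isOpen_compl, subset_compl hsU, subset_compl htV, ?_⟩
    exact (disjoint_preimage_iff hsurj).mp <| hUV.mono preimage_subset preimage_subset

variable [CompactSpace X]

theorem isClosed_setOf_exists_rel {R : X → X → Prop} (hR : IsClosed {p : X × X | R p.1 p.2})
    {C : Set X} (hC : IsClosed C) : IsClosed {x | ∃ y ∈ C, R x y} := by
  have : {x | ∃ y ∈ C, R x y} = Prod.fst '' ({p | R p.1 p.2} ∩ Prod.snd ⁻¹' C) := by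
    ext x
    simp [and_comm]
  rw [this]
  exact isClosedMap_fst_of_compactSpace _ (hR.inter (hC.preimage continuous_snd))

variable {r : X → X → Prop}

theorem isClosedMap_quot_mk (hr : Equivalence r) (hclosed : IsClosed {p : X × X | r p.1 p.2}) :
    IsClosedMap (Quot.mk r) := fun C hC => by
  rw [← isQuotientMap_quot_mk.isClosed_preimage]
  have : Quot.mk r ⁻¹' (Quot.mk r '' C) = {x | ∃ y ∈ C, r x y} := by
    ext x
    simp only [mem_preimage, mem_image, hr.quot_mk_eq_iff, mem_ofPred_eq]
    exact ⟨fun ⟨y, hy, h⟩ => ⟨y, hy, hr.symm h⟩, fun ⟨y, hy, h⟩ => ⟨y, hy, hr.symm h⟩⟩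
  exact this ▸ isClosed_setOf_exists_rel hclosed hC

theorem t2Space_quot_of_isClosed [T2Space X] (hr : Equivalence r)
    (hclosed : IsClosed {p : X × X | r p.1 p.2}) : T2Space (Quot r) :=
  have hπ := isClosedMap_quot_mk hr hclosed
  have := hπ.t1Space Quot.mk_surjective
  have := hπ.normalSpace continuous_quot_mk Quot.mk_surjective
  inferInstance

theorem existsUnique_continuous_quot_map (hr : ∀ x, r x x) {R : X → X → Prop}
    (hR : IsClosed {p : X × X | R p.1 p.2}) (htotal : ∀ x, ∃ y, R x y)
    (hcompat : ∀ {x x' y y'}, r x x' → R x y → R x' y' → r y y') :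
    ∃! T : Quot r → Quot r,
      Continuous T ∧ ∀ x y, R x y → T (Quot.mk r x) = Quot.mk r y := by
  choose g hg using htotal
  have mk_g {x y} (hxy : R x y) : Quot.mk r (g x) = Quot.mk r y :=
    Quot.sound (hcompat (hr x) (hg x) hxy)
  refine ⟨Quot.lift (Quot.mk r ∘ g) fun x x' h => Quot.sound (hcompat h (hg x) (hg x')),
    ⟨?_, fun x y => mk_g⟩, fun T ⟨_, hT⟩ => funext <| Quot.ind fun x => hT x (g x) (hg x)⟩
  refine continuous_quot_lift _ (continuous_iff_isClosed.mpr fun C hC => ?_)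
  have : Quot.mk r ∘ g ⁻¹' C = {x | ∃ y ∈ Quot.mk r ⁻¹' C, R x y} := by
    ext x
    refine ⟨fun hx => ⟨g x, hx, hg x⟩, fun ⟨y, hy, hxy⟩ => ?_⟩
    rwa [mem_preimage, comp_apply, mk_g hxy]
  exact this ▸ isClosed_setOf_exists_rel hR (hC.preimage continuous_quot_mk)

end QuotientTopology

namespace TwinnedSeq

variable (S : TwinnedSeq)

instance (i : ℕ) : TopologicalSpace (S.V i) := ⊥

instance (i : ℕ) : DiscreteTopology (S.V i) := ⟨rfl⟩

instance (i : ℕ) : Fintype (S.V i) := S.fintype i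

theorem isClosed_setOf_compatible :
    IsClosed {x : ∀ i, S.V i | ∀ i, x i = S.φ i (x (i + 1))} := by
  simp only [ofPred_forall]
  exact isClosed_iInter fun i => isClosed_eq (continuous_apply i)
    (continuous_of_discreteTopology.comp (continuous_apply (i + 1)))

instance : CompactSpace (TwLimit S) :=
  isCompact_iff_compactSpace.mp S.isClosed_setOf_compatible.isCompact

instance : T2Space (TwLimit S) :=
  inferInstanceAs (T2Space {x : ∀ i, S.V i // ∀ i, x i = S.φ i (x (i + 1))})

theorem continuous_limit_apply (i : ℕ) : Continuous fun x : TwLimit S => x.1 i :=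
  (continuous_apply i).comp continuous_subtype_val

theorem isClosed_setOf_forall_rel (R : ∀ i, S.V i → S.V i → Prop) :
    IsClosed {p : TwLimit S × TwLimit S | ∀ i, R i (p.1.1 i) (p.2.1 i)} := by
  simp only [ofPred_forall]
  exact isClosed_iInter fun i =>
    (isClosed_discrete {q : S.V i × S.V i | R i q.1 q.2}).preimage
      (((S.continuous_limit_apply i).comp continuous_fst).prodMk
        ((S.continuous_limit_apply i).comp continuous_snd))

theorem limEF_equivalence : Equivalence (limEF S) where
  refl x i := S.ds2_refl i _
  symm h i := S.ds2_symm i _ _ (h i)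
  trans {x y z} hxy hyz i := by
    simpa only [← x.2 i, ← z.2 i] using S.ds3b i _ _ _ (hxy (i + 1)) (hyz (i + 1))

theorem limEF_of_limEG {x x' y y' : TwLimit S} (hxx' : limEF S x x') (hxy : limEG S x y)
    (hxy' : limEG S x' y') : limEF S y y' := fun i => by
  simpa only [← y.2 i, ← y'.2 i] using
    S.ds3 i _ _ _ _ (hxx' (i + 1)) (hxy (i + 1)) (hxy' (i + 1))

theorem limEG_total (x : TwLimit S) : ∃ y, limEG S x y := by
  let succ (n : ℕ) := {v // S.EG n (x.1 n) v}
  have (n : ℕ) : Nonempty (succ n) := nonempty_subtype.mpr (S.ds1_out n _)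
  obtain ⟨y, hy⟩ := exists_seq_compatible_of_finite fun n (v : succ (n + 1)) =>
    (⟨S.φ n v, x.2 n ▸ S.ds1_hom n _ _ v.2⟩ : succ n)
  exact ⟨⟨fun n => y n, fun n => (congrArg Subtype.val (hy n)).symm⟩, fun n => (y n).2⟩

end TwinnedSeq

/-- The quotient space `Y = V_G / E_F` with the quotient topology is compact
Hausdorff, and there is a unique continuous map `T : Y → Y` with `T(π x) = π y`
whenever `(x, y) ∈ E_G`; that is, `(Y, T)` is a dynamical system. -/
theorem quotient_system (S : TwinnedSeq) :
    CompactSpace (Quot (limEF S)) ∧ T2Space (Quot (limEF S)) ∧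
      ∃! T : Quot (limEF S) → Quot (limEF S), Continuous T ∧
        ∀ x y : TwLimit S, limEG S x y →
          T (Quot.mk (limEF S) x) = Quot.mk (limEF S) y :=
  ⟨inferInstance,
    t2Space_quot_of_isClosed S.limEF_equivalence (S.isClosed_setOf_forall_rel S.EF),
    existsUnique_continuous_quot_map S.limEF_equivalence.refl (S.isClosed_setOf_forall_rel S.EG)
      S.limEG_total S.limEF_of_limEG⟩
end

section
/- Let X be a nonempty compact metric space, f : X → X continuous, V a finite open cover of X, and δ > 0. Then there exists a finite open cover U of X with ∅ ∉ U such that, setting ε = max{mesh f(U), mesh U} and U^ε = {B(U, ε) : U ∈ U} (where B(U, ε) is the open ε-neighbourhood of U): (i) U^ε refines V; (ii) every member W of V satisfies W = ∪{U ∈ U : U ⊆ W}; (iii) 2·max{mesh f(U^ε), mesh U^ε} < δ; and (iv) mesh U ≤ δ. -/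
open scoped Classical
/-- The mesh number of a finite family of subsets of a metric space:
`mesh 𝒰 = sup_{U ∈ 𝒰} diam U`. -/
noncomputable def meshF {X : Type} [MetricSpace X] (𝒰 : Finset (Set X)) : ℝ :=
  ⨆ U ∈ 𝒰, Metric.diam U

lemma meshF_le {X : Type} [MetricSpace X] {𝒰 : Finset (Set X)} {a : ℝ}
    (ha : 0 ≤ a) (h : ∀ U ∈ 𝒰, Metric.diam U ≤ a) : meshF 𝒰 ≤ a :=
  Real.iSup_le (fun U => Real.iSup_le (fun hU => h U hU) ha) ha

/-- **Inductive step of the cover construction.** Given a finite open cover `𝒱` of a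
nonempty compact metric space `X`, a continuous `f : X → X` and `δ > 0`, there is a
finite open cover `𝒰` of `X` with `∅ ∉ 𝒰` such that, setting
`ε = max (mesh f(𝒰)) (mesh 𝒰)` and `𝒰^ε = {B(U, ε) : U ∈ 𝒰}`:
(i) `𝒰^ε` refines `𝒱`; (ii) every `W ∈ 𝒱` is the union of the members of `𝒰`
contained in it; (iii) `2 · max (mesh f(𝒰^ε)) (mesh 𝒰^ε) < δ`; (iv) `mesh 𝒰 ≤ δ`. -/
theorem exists_refining_cover {X : Type} [MetricSpace X] [CompactSpace X] [Nonempty X]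
    (f : X → X) (hf : Continuous f)
    (𝒱 : Finset (Set X)) (h𝒱open : ∀ W ∈ 𝒱, IsOpen W)
    (h𝒱cover : ⋃₀ (𝒱 : Set (Set X)) = Set.univ)
    (δ : ℝ) (hδ : 0 < δ) :
    ∃ 𝒰 : Finset (Set X),
      (∅ : Set X) ∉ 𝒰 ∧
      (∀ U ∈ 𝒰, IsOpen U) ∧
      ⋃₀ (𝒰 : Set (Set X)) = Set.univ ∧
      ∃ ε : ℝ, ε = max (meshF (𝒰.image (fun U => f '' U))) (meshF 𝒰) ∧
        -- (i) 𝒰^ε refines 𝒱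
        (∀ U ∈ 𝒰, ∃ W ∈ 𝒱, Metric.thickening ε U ⊆ W) ∧
        -- (ii) every W ∈ 𝒱 is the union of the members of 𝒰 contained in it
        (∀ W ∈ 𝒱, W = ⋃₀ {U : Set X | U ∈ 𝒰 ∧ U ⊆ W}) ∧
        -- (iii)
        2 * max (meshF ((𝒰.image (fun U => Metric.thickening ε U)).image (fun U => f '' U)))
            (meshF (𝒰.image (fun U => Metric.thickening ε U))) < δ ∧
        -- (iv)
        meshF 𝒰 ≤ δ := by
  -- Lebesgue number of 𝒱
  obtain ⟨L, hLpos, hL⟩ :=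
    lebesgue_number_lemma_of_metric (s := (Set.univ : Set X))
      (c := fun W : {W // W ∈ 𝒱} => (W : Set X)) isCompact_univ
      (fun i => h𝒱open i i.2)
      (by
        rw [← h𝒱cover, Set.sUnion_eq_iUnion]
        exact Set.iUnion_subset fun i => Set.subset_iUnion
          (fun W : {W // W ∈ 𝒱} => (W : Set X)) ⟨i.1, by simpa using i.2⟩)
  set c : ℝ := min δ L / 100 with hc
  have hcpos : 0 < c := by
    have : 0 < min δ L := lt_min hδ hLpos
    positivity
  have hcδ : c ≤ δ / 100 := by
    have := min_le_left δ L
    rw [hc]; linarith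
  have hcL : c ≤ L / 100 := by
    have := min_le_right δ L
    rw [hc]; linarith
  have hUC := Metric.uniformContinuous_iff.mp (CompactSpace.uniformContinuous_of_continuous hf)
  obtain ⟨η1', hη1'pos, hη1'⟩ := hUC c hcpos
  set η1 : ℝ := min η1' c with hη1def
  have hη1pos : 0 < η1 := lt_min hη1'pos hcpos
  have hη1c : η1 ≤ c := min_le_right _ _
  have hη1uc : ∀ a b : X, dist a b < η1 → dist (f a) (f b) < c := fun a b h =>
    hη1' (lt_of_lt_of_le h (min_le_left _ _))
  obtain ⟨η2', hη2'pos, hη2'⟩ := hUC (η1 / 5) (by positivity)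
  set η2 : ℝ := min η2' η1 with hη2def
  have hη2pos : 0 < η2 := lt_min hη2'pos hη1pos
  have hη21 : η2 ≤ η1 := min_le_right _ _
  have hη2uc : ∀ a b : X, dist a b < η2 → dist (f a) (f b) < η1 / 5 := fun a b h =>
    hη2' (lt_of_lt_of_le h (min_le_left _ _))
  set r : ℝ := η2 / 10 with hr
  have hrpos : 0 < r := by positivity
  -- finite subcover by balls of radius r
  obtain ⟨t, ht⟩ := isCompact_univ.elim_finite_subcover (fun x : X => Metric.ball x r)
    (fun x => Metric.isOpen_ball)
    (fun x _ => Set.mem_iUnion.2 ⟨x, Metric.mem_ball_self hrpos⟩)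
  set 𝒰 : Finset (Set X) :=
    ((t ×ˢ 𝒱).image (fun p => Metric.ball p.1 r ∩ p.2)).filter (fun U => U.Nonempty) with h𝒰
  -- structure of members of 𝒰
  have hmem : ∀ U ∈ 𝒰, U.Nonempty ∧ ∃ x, ∃ W ∈ 𝒱, U = Metric.ball x r ∩ W := by
    intro U hU
    rw [h𝒰, Finset.mem_filter] at hU
    obtain ⟨hU1, hU2⟩ := hU
    obtain ⟨p, hp, hpU⟩ := Finset.mem_image.mp hU1
    rw [Finset.mem_product] at hp
    exact ⟨hU2, p.1, p.2, hp.2, hpU.symm⟩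
  -- 𝒰 contains the witnessing sets
  have hmem' : ∀ x ∈ t, ∀ W ∈ 𝒱, (Metric.ball x r ∩ W).Nonempty → Metric.ball x r ∩ W ∈ 𝒰 := by
    intro x hx W hW hne
    rw [h𝒰, Finset.mem_filter]
    exact ⟨Finset.mem_image.mpr ⟨(x, W), Finset.mem_product.mpr ⟨hx, hW⟩, rfl⟩, hne⟩
  -- diameter bounds
  have hdiam : ∀ U ∈ 𝒰, ∀ a ∈ U, ∀ b ∈ U, dist a b < 2 * r := by
    intro U hU a ha b hb
    obtain ⟨-, x, W, -, hUeq⟩ := hmem U hU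
    rw [hUeq] at ha hb
    calc dist a b ≤ dist a x + dist x b := dist_triangle _ _ _
      _ < r + r := by
          have h1 := Metric.mem_ball.mp ha.1
          have h2 := Metric.mem_ball.mp hb.1
          rw [dist_comm x b] at *
          linarith
      _ = 2 * r := by ring
  have hdiamU : ∀ U ∈ 𝒰, Metric.diam U ≤ 2 * r := by
    intro U hU
    exact Metric.diam_le_of_forall_dist_le (by positivity)
      (fun a ha b hb => le_of_lt (hdiam U hU a ha b hb))
  have hdiamfU : ∀ U ∈ 𝒰, Metric.diam (f '' U) ≤ η1 / 5 := by
    intro U hU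
    refine Metric.diam_le_of_forall_dist_le (by positivity) ?_
    rintro _ ⟨a, ha, rfl⟩ _ ⟨b, hb, rfl⟩
    have : dist a b < η2 := by
      have := hdiam U hU a ha b hb
      rw [hr] at this; linarith
    exact le_of_lt (hη2uc a b this)
  refine ⟨𝒰, ?_, ?_, ?_, ?_⟩
  · -- ∅ ∉ 𝒰
    intro h
    exact Set.not_nonempty_empty (hmem _ h).1
  · -- openness
    intro U hU
    obtain ⟨-, x, W, hW, hUeq⟩ := hmem U hU
    rw [hUeq]
    exact Metric.isOpen_ball.inter (h𝒱open W hW)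
  · -- covering
    apply Set.eq_univ_of_forall
    intro x
    have hxW : x ∈ ⋃₀ (𝒱 : Set (Set X)) := by rw [h𝒱cover]; trivial
    obtain ⟨W, hW, hxW⟩ := hxW
    have hxt := ht (Set.mem_univ x)
    obtain ⟨y, hy⟩ := Set.mem_iUnion.mp hxt
    obtain ⟨hyt, hxy⟩ := Set.mem_iUnion.mp hy
    refine Set.mem_sUnion.mpr ⟨Metric.ball y r ∩ W, ?_, hxy, hxW⟩
    exact_mod_cast hmem' y hyt W hW ⟨x, hxy, hxW⟩
  · -- the ε part
    set ε : ℝ := max (meshF (𝒰.image (fun U => f '' U))) (meshF 𝒰) with hε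
    have hεle : ε ≤ η1 / 5 := by
      rw [hε]
      apply max_le
      · refine meshF_le (by positivity) ?_
        intro V hV
        obtain ⟨U, hU, rfl⟩ := Finset.mem_image.mp hV
        exact hdiamfU U hU
      · refine meshF_le (by positivity) ?_
        intro U hU
        calc Metric.diam U ≤ 2 * r := hdiamU U hU
          _ ≤ η1 / 5 := by rw [hr]; linarith
    -- distance bound inside a thickened member
    have hthick : ∀ U ∈ 𝒰, ∀ a ∈ Metric.thickening ε U, ∀ b ∈ Metric.thickening ε U,
        dist a b < 3 * η1 / 5 := by
      intro U hU a ha b hb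
      obtain ⟨u, hu, hau⟩ := Metric.mem_thickening_iff.mp ha
      obtain ⟨v, hv, hbv⟩ := Metric.mem_thickening_iff.mp hb
      have huv := hdiam U hU u hu v hv
      have h1 : dist a b ≤ dist a u + dist u v + dist v b := dist_triangle4 a u v b
      rw [dist_comm v b] at h1
      have h2r : 2 * r ≤ η1 / 5 := by rw [hr]; linarith
      linarith
    refine ⟨ε, rfl, ?_, ?_, ?_, ?_⟩
    · -- (i) refinement via the Lebesgue number
      intro U hU
      obtain ⟨⟨p, hp⟩, x, W, hW, hUeq⟩ := hmem U hU
      obtain ⟨i, hi⟩ := hL p (Set.mem_univ p)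
      refine ⟨i.1, i.2, fun y hy => hi ?_⟩
      obtain ⟨u, hu, hyu⟩ := Metric.mem_thickening_iff.mp hy
      have hup := hdiam U hU u hu p hp
      have : dist y p ≤ dist y u + dist u p := dist_triangle _ _ _
      have h2r : 2 * r ≤ η1 / 5 := by rw [hr]; linarith
      have : dist y p < 3 * η1 / 5 := by linarith
      have hη1L : η1 ≤ L / 100 := le_trans hη1c hcL
      exact Metric.mem_ball.mpr (by linarith)
    · -- (ii)
      intro W hW
      ext x
      constructor
      · intro hx
        have hxt := ht (Set.mem_univ x)
        obtain ⟨y, hy⟩ := Set.mem_iUnion.mp hxt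
        obtain ⟨hyt, hxy⟩ := Set.mem_iUnion.mp hy
        refine Set.mem_sUnion.mpr ⟨Metric.ball y r ∩ W, ⟨?_, Set.inter_subset_right⟩, hxy, hx⟩
        exact hmem' y hyt W hW ⟨x, hxy, hx⟩
      · rintro ⟨U, ⟨-, hUW⟩, hxU⟩
        exact hUW hxU
    · -- (iii)
      have hb1 : meshF ((𝒰.image (fun U => Metric.thickening ε U)).image (fun U => f '' U)) ≤ c := by
        refine meshF_le (le_of_lt hcpos) ?_
        intro V hV
        obtain ⟨V', hV', rfl⟩ := Finset.mem_image.mp hV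
        obtain ⟨U, hU, rfl⟩ := Finset.mem_image.mp hV'
        refine Metric.diam_le_of_forall_dist_le (le_of_lt hcpos) ?_
        rintro _ ⟨a, ha, rfl⟩ _ ⟨b, hb, rfl⟩
        have hab := hthick U hU a ha b hb
        exact le_of_lt (hη1uc a b (by linarith))
      have hb2 : meshF (𝒰.image (fun U => Metric.thickening ε U)) ≤ c := by
        refine meshF_le (le_of_lt hcpos) ?_
        intro V hV
        obtain ⟨U, hU, rfl⟩ := Finset.mem_image.mp hV
        refine Metric.diam_le_of_forall_dist_le (le_of_lt hcpos) ?_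
        intro a ha b hb
        have hab := hthick U hU a ha b hb
        have : 3 * η1 / 5 ≤ c := by linarith
        linarith
      have hmax := max_le hb1 hb2
      have : c ≤ δ / 100 := hcδ
      linarith
    · -- (iv)
      refine meshF_le (le_of_lt hδ) ?_
      intro U hU
      have h2r : 2 * r ≤ η1 / 5 := by rw [hr]; linarith
      have : η1 ≤ δ / 100 := le_trans hη1c hcδ
      calc Metric.diam U ≤ 2 * r := hdiamU U hU
        _ ≤ δ := by linarith
end

section
/- Let (X, f) be a dynamical system, i.e., X a nonempty compact metric space and f : X → X continuous (not necessarily surjective). Then there exists an inverse sequence (G, F) of twinned graph homomorphisms such that (X, f) is topologically conjugate to the induced quotient system (Y, T), where Y = V_G / E_F with the quotient topology, π : V_G → Y is the quotient map, and T : Y → Y is the unique continuous map satisfying T(π(x)) = π(y) whenever (x, y) ∈ E_G. That is, there exists a homeomorphism ψ : Y → X with f ∘ ψ = ψ ∘ T. -/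
/-!
Choose scales `η n` shrinking at least fourfold at each step, and so fast that `f` maps points
`5 η (n + 1)`-close to points `η n`-close, together with finite `η n`-nets. A vertex of level `n`
is a history of net points `c₁, …, cₙ` whose closed balls `B(cₖ, η k)` meet; their intersection
is its cell. Every thread of the inverse limit is a nested sequence of cells shrinking to a point,
which gives a continuous surjection `V_G → X`; its fibres are exactly the `E_F`-classes and it
carries `E_G` to `f`. Since `V_G` is compact and `X` is Hausdorff, the induced map `V_G / E_F → X` is a
homeomorphism.
-/

open Metric Set Filter Topology Function

lemma isHomeomorph_quot_lift {α Y : Type*} [TopologicalSpace α] [CompactSpace α]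
    [TopologicalSpace Y] [T2Space Y] {r : α → α → Prop} {p : α → Y} (hp : Continuous p)
    (hp_surj : Surjective p) (hr : ∀ a b, r a b ↔ p a = p b) :
    IsHomeomorph (Quot.lift p fun a b => (hr a b).mp) := by
  refine isHomeomorph_iff_continuous_bijective.mpr
    ⟨continuous_quot_lift _ hp, ?_, (Quot.surjective_lift _).mpr hp_surj⟩
  rintro ⟨a⟩ ⟨b⟩ h
  exact Quot.sound ((hr a b).mpr h)

namespace TwinnedSeq

variable (S : TwinnedSeq)

instance inst_s15 : CompactSpace (TwLimit S) := by
  let _ : ∀ i, TopologicalSpace (S.V i) := fun _ => ⊥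
  have : ∀ i, DiscreteTopology (S.V i) := fun _ => ⟨rfl⟩
  have : ∀ i, Finite (S.V i) := fun i => @Finite.of_fintype _ (S.fintype i)
  have hclosed : IsClosed {x : ∀ i, S.V i | ∀ i, x i = S.φ i (x (i + 1))} := by
    rw [ofPred_forall]
    exact isClosed_iInter fun i => isClosed_eq (continuous_apply i)
      (continuous_of_discreteTopology.comp (continuous_apply (i + 1)))
  exact isCompact_iff_compactSpace.mp hclosed.isCompact

lemma eventually_apply_eq (x : TwLimit S) (i : ℕ) : ∀ᶠ y in 𝓝 x, y.1 i = x.1 i := by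
  let _ : ∀ i, TopologicalSpace (S.V i) := fun _ => ⊥
  have : ∀ i, DiscreteTopology (S.V i) := fun _ => ⟨rfl⟩
  have hcont : Continuous fun y : TwLimit S => y.1 i :=
    (continuous_apply i).comp continuous_subtype_val
  exact hcont.continuousAt (isOpen_discrete {x.1 i} |>.mem_nhds rfl)

variable {S}

theorem exists_conjugacy_of_factor {X : Type} [TopologicalSpace X] [T2Space X] {f : X → X}
    (hf : Continuous f) {p : TwLimit S → X} (hp : Continuous p) (hp_surj : Surjective p)
    (hEF : ∀ x y, limEF S x y ↔ p x = p y) (hEG : ∀ x y, limEG S x y → f (p x) = p y) :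
    ∃ T : Quot (limEF S) → Quot (limEF S), Continuous T ∧
      (∀ x y : TwLimit S, limEG S x y → T (Quot.mk (limEF S) x) = Quot.mk (limEF S) y) ∧
      ∃ ψ : Quot (limEF S) → X, IsHomeomorph ψ ∧ f ∘ ψ = ψ ∘ T := by
  have hψ := isHomeomorph_quot_lift hp hp_surj hEF
  let e := hψ.homeomorph
  refine ⟨e.symm ∘ f ∘ e, e.symm.continuous.comp (hf.comp e.continuous), fun x y hxy => ?_,
    e, hψ, funext fun q => (e.apply_symm_apply _).symm⟩
  change e.symm (f (p x)) = _
  rw [hEG x y hxy]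
  exact e.symm_apply_apply (Quot.mk _ y)

end TwinnedSeq

lemma exists_scales {X : Type*} [PseudoMetricSpace X] {f : X → X} (hf : UniformContinuous f) :
    ∃ η : ℕ → ℝ, (∀ n, 0 < η n) ∧ (∀ n, η (n + 1) ≤ η n / 4) ∧
      ∀ n x y, dist x y ≤ 5 * η (n + 1) → dist (f x) (f y) ≤ η n := by
  choose δ hδ_pos hδ using uniformContinuous_iff_le.mp hf
  let η : ℕ → {r : ℝ // 0 < r} := fun n => n.rec ⟨1, one_pos⟩ fun _ r =>
    ⟨min (r / 4) (δ r r.2 / 5), lt_min (by linarith [r.2]) (by linarith [hδ_pos r r.2])⟩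
  have hη_succ : ∀ n, (η (n + 1)).1 = min ((η n).1 / 4) (δ (η n).1 (η n).2 / 5) := fun _ => rfl
  refine ⟨fun n => (η n).1, fun n => (η n).2, fun n => ?_, fun n x y hxy => hδ _ (η n).2 ?_⟩
  · exact (hη_succ n).trans_le (min_le_left _ _)
  · linarith [(hη_succ n).trans_le (min_le_right _ _)]

lemma exists_finset_forall_dist_le {X : Type*} [PseudoMetricSpace X] [CompactSpace X] {ε : ℝ}
    (hε : 0 < ε) : ∃ s : Finset X, ∀ x, ∃ c ∈ s, dist x c ≤ ε := by
  obtain ⟨s, -, hs⟩ := (isCompact_univ : IsCompact (univ : Set X)).elim_nhds_subcover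
    (fun x => closedBall x ε) fun x _ => closedBall_mem_nhds x hε
  refine ⟨s, fun x => ?_⟩
  simpa using hs (mem_univ x)

structure CellScheme {X : Type} [MetricSpace X] (f : X → X) where
  scale : ℕ → ℝ
  scale_pos : ∀ n, 0 < scale n
  /- `4 = 1 + 2 + 1` and `5 = 2 + 1 + 2`: a cell at level `n + 1` has diameter `2 * scale (n + 1)`,
  and two near cells are `scale (n + 1)` apart, which is what (DS3b) and (DS3) chain together. -/
  scale_succ_le : ∀ n, scale (n + 1) ≤ scale n / 4
  dist_map_le : ∀ n x y, dist x y ≤ 5 * scale (n + 1) → dist (f x) (f y) ≤ scale n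
  center : ℕ → Finset X
  nearCenter : ℕ → X → X
  nearCenter_mem : ∀ n x, nearCenter n x ∈ center n
  dist_nearCenter_le : ∀ n x, dist x (nearCenter n x) ≤ scale n

namespace CellScheme

variable {X : Type} [MetricSpace X] {f : X → X}

lemma nonempty_of_continuous [CompactSpace X] (hf : Continuous f) : Nonempty (CellScheme f) := by
  obtain ⟨η, hη_pos, hη_succ, hη_map⟩ :=
    exists_scales (CompactSpace.uniformContinuous_of_continuous hf)
  choose center c hc_mem hc_dist using fun n => exists_finset_forall_dist_le (X := X) (hη_pos n)
  exact ⟨⟨η, hη_pos, hη_succ, hη_map, center, c, hc_mem, hc_dist⟩⟩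

variable (D : CellScheme f)

lemma scale_succ_le_self (n : ℕ) : D.scale (n + 1) ≤ D.scale n := by
  linarith [D.scale_succ_le n, D.scale_pos n]

lemma tendsto_scale : Tendsto D.scale atTop (𝓝 0) := by
  have hgeom : ∀ n, D.scale n ≤ D.scale 0 * (1 / 4) ^ n := by
    intro n
    induction n with
    | zero => simp
    | succ n ih => rw [pow_succ]; linarith [D.scale_succ_le n]
  refine squeeze_zero (fun n => (D.scale_pos n).le) hgeom ?_
  simpa using (tendsto_pow_atTop_nhds_zero_of_lt_one (r := (1 / 4 : ℝ)) (by norm_num)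
    (by norm_num)).const_mul (D.scale 0)

lemma eq_of_forall_dist_le {a b : X} (C : ℝ) (h : ∀ n, dist a b ≤ C * D.scale (n + 1)) :
    a = b := by
  have hlim : Tendsto (fun n => C * D.scale (n + 1)) atTop (𝓝 0) := by
    simpa using (D.tendsto_scale.comp (tendsto_add_atTop_nat 1)).const_mul C
  exact dist_le_zero.mp (ge_of_tendsto' hlim h)

/-- Entry `k` of a history is a centre at scale `k + 1`. -/
def cellOf {n : ℕ} (l : Fin n → X) : Set X :=
  ⋂ k : Fin n, closedBall (l k) (D.scale (k + 1))

lemma mem_cellOf_succ {n : ℕ} {l : Fin (n + 1) → X} {x : X} :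
    x ∈ D.cellOf l ↔ x ∈ D.cellOf (Fin.init l) ∧ dist x (l (Fin.last n)) ≤ D.scale (n + 1) := by
  simp only [cellOf, mem_iInter, mem_closedBall, Fin.forall_fin_succ', Fin.init, Fin.val_castSucc,
    Fin.val_last]

def Vertex (n : ℕ) : Type :=
  {l : Fin n → X // (∀ k : Fin n, l k ∈ D.center (k + 1)) ∧ (D.cellOf l).Nonempty}

def cell {n : ℕ} (v : D.Vertex n) : Set X := D.cellOf v.1

variable {D}

lemma cell_nonempty {n : ℕ} (v : D.Vertex n) : (D.cell v).Nonempty := v.2.2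

lemma isClosed_cell {n : ℕ} (v : D.Vertex n) : IsClosed (D.cell v) :=
  isClosed_iInter fun _ => isClosed_closedBall

lemma dist_le_of_mem_cell {n : ℕ} {v : D.Vertex (n + 1)} {x y : X} (hx : x ∈ D.cell v)
    (hy : y ∈ D.cell v) : dist x y ≤ 2 * D.scale (n + 1) := by
  have hx' := (D.mem_cellOf_succ.mp hx).2
  have hy' := (D.mem_cellOf_succ.mp hy).2
  linarith [dist_triangle_right x y (v.1 (Fin.last n))]

instance : Subsingleton (D.Vertex 0) :=
  ⟨fun _ _ => Subtype.ext (funext fun k => k.elim0)⟩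

instance (n : ℕ) : Finite (D.Vertex n) :=
  Finite.of_injective (fun (v : D.Vertex n) (k : Fin n) => (⟨v.1 k, v.2.1 k⟩ : D.center (k + 1)))
    fun _ _ h => Subtype.ext (funext fun k => congrArg Subtype.val (congrFun h k))

variable (D) in
def restrict {n : ℕ} (v : D.Vertex (n + 1)) : D.Vertex n :=
  ⟨Fin.init v.1, fun k => v.2.1 k.castSucc, v.2.2.mono fun _ hx => (D.mem_cellOf_succ.mp hx).1⟩

lemma cell_subset_cell_restrict {n : ℕ} (v : D.Vertex (n + 1)) :
    D.cell v ⊆ D.cell (D.restrict v) :=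
  fun _ hx => (D.mem_cellOf_succ.mp hx).1

lemma exists_restrict_eq {n : ℕ} {v : D.Vertex n} {x : X} (hx : x ∈ D.cell v) :
    ∃ w : D.Vertex (n + 1), D.restrict w = v ∧ x ∈ D.cell w := by
  have hxw : x ∈ D.cellOf (Fin.snoc v.1 (D.nearCenter (n + 1) x)) := by
    simpa [mem_cellOf_succ, Fin.init_snoc] using ⟨hx, D.dist_nearCenter_le (n + 1) x⟩
  refine ⟨⟨Fin.snoc v.1 (D.nearCenter (n + 1) x), fun k => ?_, x, hxw⟩, ?_, hxw⟩
  · induction k using Fin.lastCases with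
    | last => simpa using D.nearCenter_mem (n + 1) x
    | cast k => simpa using v.2.1 k
  · exact Subtype.ext (Fin.init_snoc (α := fun _ => X) _ _)

variable (D) in
def vertexOf (n : ℕ) (x : X) : D.Vertex n :=
  ⟨fun k => D.nearCenter (k + 1) x, fun _ => D.nearCenter_mem _ x,
    x, mem_iInter.mpr fun _ => D.dist_nearCenter_le _ x⟩

lemma mem_cell_vertexOf (n : ℕ) (x : X) : x ∈ D.cell (D.vertexOf n x) :=
  mem_iInter.mpr fun _ => D.dist_nearCenter_le _ x

lemma restrict_vertexOf (n : ℕ) (x : X) : D.restrict (D.vertexOf (n + 1) x) = D.vertexOf n x :=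
  rfl

variable (D) in
def Edge {n : ℕ} (u v : D.Vertex n) : Prop := ∃ x ∈ D.cell u, f x ∈ D.cell v

variable (D) in
def Near {n : ℕ} (u v : D.Vertex n) : Prop := ∃ x ∈ D.cell u, ∃ y ∈ D.cell v, dist x y ≤ D.scale n

lemma Edge.restrict {n : ℕ} {u v : D.Vertex (n + 1)} (h : D.Edge u v) :
    D.Edge (D.restrict u) (D.restrict v) :=
  let ⟨x, hxu, hxv⟩ := h
  ⟨x, cell_subset_cell_restrict u hxu, cell_subset_cell_restrict v hxv⟩

lemma Edge.exists_lift {n : ℕ} {u v : D.Vertex n} (h : D.Edge u v) :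
    ∃ a b : D.Vertex (n + 1), D.Edge a b ∧ D.restrict a = u ∧ D.restrict b = v := by
  obtain ⟨x, hxu, hxv⟩ := h
  obtain ⟨a, rfl, hxa⟩ := exists_restrict_eq hxu
  obtain ⟨b, rfl, hxb⟩ := exists_restrict_eq hxv
  exact ⟨a, b, ⟨x, hxa, hxb⟩, rfl, rfl⟩

lemma exists_edge {n : ℕ} (u : D.Vertex n) : ∃ v, D.Edge u v :=
  let ⟨x, hx⟩ := cell_nonempty u
  ⟨D.vertexOf n (f x), x, hx, mem_cell_vertexOf n (f x)⟩

lemma near_refl {n : ℕ} (u : D.Vertex n) : D.Near u u :=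
  let ⟨x, hx⟩ := cell_nonempty u
  ⟨x, hx, x, hx, by simpa using (D.scale_pos n).le⟩

lemma Near.symm {n : ℕ} {u v : D.Vertex n} (h : D.Near u v) : D.Near v u :=
  let ⟨x, hx, y, hy, hxy⟩ := h
  ⟨y, hy, x, hx, by rwa [dist_comm]⟩

lemma Near.restrict {n : ℕ} {u v : D.Vertex (n + 1)} (h : D.Near u v) :
    D.Near (D.restrict u) (D.restrict v) :=
  let ⟨x, hx, y, hy, hxy⟩ := h
  ⟨x, cell_subset_cell_restrict u hx, y, cell_subset_cell_restrict v hy,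
    hxy.trans (D.scale_succ_le_self n)⟩

lemma Near.restrict_of_edge {n : ℕ} {a b a' b' : D.Vertex (n + 1)} (h : D.Near a b)
    (ha : D.Edge a a') (hb : D.Edge b b') : D.Near (D.restrict a') (D.restrict b') := by
  obtain ⟨x, hx, x', hx', hxx'⟩ := h
  obtain ⟨y, hya, hya'⟩ := ha
  obtain ⟨z, hzb, hzb'⟩ := hb
  refine ⟨f y, cell_subset_cell_restrict a' hya', f z, cell_subset_cell_restrict b' hzb',
    D.dist_map_le n y z ?_⟩
  calc dist y z ≤ dist y x + dist x x' + dist x' z := dist_triangle4 y x x' z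
    _ ≤ 2 * D.scale (n + 1) + D.scale (n + 1) + 2 * D.scale (n + 1) := by
        gcongr
        exacts [dist_le_of_mem_cell hya hx, dist_le_of_mem_cell hx' hzb]
    _ = 5 * D.scale (n + 1) := by ring

lemma Near.restrict_trans {n : ℕ} {a b c : D.Vertex (n + 1)} (hab : D.Near a b)
    (hbc : D.Near b c) : D.Near (D.restrict a) (D.restrict c) := by
  obtain ⟨x, hx, x', hx', hxx'⟩ := hab
  obtain ⟨y, hy, y', hy', hyy'⟩ := hbc
  refine ⟨x, cell_subset_cell_restrict a hx, y', cell_subset_cell_restrict c hy', ?_⟩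
  calc dist x y' ≤ dist x x' + dist x' y + dist y y' := dist_triangle4 x x' y y'
    _ ≤ D.scale (n + 1) + 2 * D.scale (n + 1) + D.scale (n + 1) := by
        gcongr
        exact dist_le_of_mem_cell hx' hy
    _ ≤ D.scale n := by linarith [D.scale_succ_le n]

variable [Nonempty X]

variable (D) in
noncomputable def toTwinnedSeq : TwinnedSeq where
  V := D.Vertex
  fintype _ := Fintype.ofFinite _
  EG _ := D.Edge
  EF _ := D.Near
  φ _ := D.restrict
  ds0_nonempty := ⟨D.vertexOf 0 (Classical.arbitrary X)⟩
  ds0_subsingleton := Subsingleton.elim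
  ds1_hom _ _ _ := Edge.restrict
  ds1_edge_surj _ _ _ := Edge.exists_lift
  ds1_out _ := exists_edge
  ds2_hom _ _ _ := Near.restrict
  ds2_symm _ _ _ := Near.symm
  ds2_refl _ := near_refl
  ds3 _ _ _ _ _ := Near.restrict_of_edge
  ds3b _ _ _ _ := Near.restrict_trans

lemma cell_succ_subset (x : TwLimit D.toTwinnedSeq) (i : ℕ) :
    D.cell (x.1 (i + 1)) ⊆ D.cell (x.1 i) := by
  rw [x.2 i]
  exact cell_subset_cell_restrict _

variable [CompactSpace X]

lemma nonempty_iInter_cell (x : TwLimit D.toTwinnedSeq) : (⋂ i, D.cell (x.1 i)).Nonempty :=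
  IsCompact.nonempty_iInter_of_sequence_nonempty_isCompact_isClosed _ (cell_succ_subset x)
    (fun _ => cell_nonempty _) (isClosed_cell _).isCompact fun _ => isClosed_cell _

variable (D) in
noncomputable def limitPoint (x : TwLimit D.toTwinnedSeq) : X :=
  (nonempty_iInter_cell x).choose

lemma limitPoint_mem_cell (x : TwLimit D.toTwinnedSeq) (i : ℕ) :
    D.limitPoint x ∈ D.cell (x.1 i) :=
  mem_iInter.mp (nonempty_iInter_cell x).choose_spec i

lemma limEF_iff_limitPoint_eq (x y : TwLimit D.toTwinnedSeq) :
    limEF D.toTwinnedSeq x y ↔ D.limitPoint x = D.limitPoint y := by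
  constructor
  · intro h
    refine D.eq_of_forall_dist_le 5 fun i => ?_
    obtain ⟨a, ha, b, hb, hab⟩ := h (i + 1)
    calc dist (D.limitPoint x) (D.limitPoint y)
        ≤ dist (D.limitPoint x) a + dist a b + dist b (D.limitPoint y) := dist_triangle4 _ _ _ _
      _ ≤ 2 * D.scale (i + 1) + D.scale (i + 1) + 2 * D.scale (i + 1) := by
          gcongr
          exacts [dist_le_of_mem_cell (limitPoint_mem_cell x _) ha,
            dist_le_of_mem_cell hb (limitPoint_mem_cell y _)]
      _ = 5 * D.scale (i + 1) := by ring
  · intro h i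
    exact ⟨_, limitPoint_mem_cell x i, _, limitPoint_mem_cell y i, by
      simpa [h] using (D.scale_pos i).le⟩

lemma limitPoint_surjective : Surjective D.limitPoint := fun z =>
  ⟨⟨fun i => D.vertexOf i z, fun i => (restrict_vertexOf i z).symm⟩,
    D.eq_of_forall_dist_le 2 fun i =>
      dist_le_of_mem_cell (limitPoint_mem_cell _ (i + 1)) (mem_cell_vertexOf (i + 1) z)⟩

lemma map_limitPoint_of_limEG {x y : TwLimit D.toTwinnedSeq} (h : limEG D.toTwinnedSeq x y) :
    f (D.limitPoint x) = D.limitPoint y := by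
  refine D.eq_of_forall_dist_le 5 fun i => ?_
  obtain ⟨w, hwx, hwy⟩ := h (i + 2)
  have hw : dist (f (D.limitPoint x)) (f w) ≤ D.scale (i + 1) := by
    refine D.dist_map_le _ _ _ ((dist_le_of_mem_cell (limitPoint_mem_cell x _) hwx).trans ?_)
    linarith [D.scale_pos (i + 2)]
  calc dist (f (D.limitPoint x)) (D.limitPoint y)
      ≤ dist (f (D.limitPoint x)) (f w) + dist (f w) (D.limitPoint y) := dist_triangle _ _ _
    _ ≤ D.scale (i + 1) + 2 * D.scale (i + 2) :=
        add_le_add hw (dist_le_of_mem_cell hwy (limitPoint_mem_cell y _))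
    _ ≤ 5 * D.scale (i + 1) := by linarith [D.scale_succ_le_self (i + 1), D.scale_pos (i + 1)]

lemma continuous_limitPoint : Continuous D.limitPoint := by
  refine Metric.continuous_iff'.mpr fun x ε hε => ?_
  have hlim : Tendsto (fun i => 2 * D.scale (i + 1)) atTop (𝓝 0) := by
    simpa using (D.tendsto_scale.comp (tendsto_add_atTop_nat 1)).const_mul 2
  obtain ⟨i, hi⟩ := (hlim.eventually (gt_mem_nhds hε)).exists
  filter_upwards [D.toTwinnedSeq.eventually_apply_eq x (i + 1)] with y hy
  have hy_mem : D.limitPoint y ∈ D.cell (x.1 (i + 1)) := hy ▸ limitPoint_mem_cell y (i + 1)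
  exact (dist_le_of_mem_cell hy_mem (limitPoint_mem_cell x _)).trans_lt hi

end CellScheme

/-- **Main theorem.** Every dynamical system `(X, f)` (`X` a nonempty compact metric
space, `f` continuous, not necessarily surjective) is topologically conjugate to the
quotient system `(Y, T)` induced by some inverse sequence of twinned graph
homomorphisms, where `Y = V_G / E_F` with the quotient topology and `T` is the unique
continuous map with `T(π x) = π y` whenever `(x, y) ∈ E_G`: there is a homeomorphism
`ψ : Y → X` with `f ∘ ψ = ψ ∘ T`. -/
theorem conjugate_to_twinned_limit {X : Type} [MetricSpace X] [CompactSpace X]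
    [Nonempty X] (f : X → X) (hf : Continuous f) :
    ∃ (S : TwinnedSeq) (T : Quot (limEF S) → Quot (limEF S)),
      Continuous T ∧
      (∀ x y : TwLimit S, limEG S x y →
        T (Quot.mk (limEF S) x) = Quot.mk (limEF S) y) ∧
      ∃ ψ : Quot (limEF S) → X, IsHomeomorph ψ ∧ f ∘ ψ = ψ ∘ T := by
  obtain ⟨D⟩ := CellScheme.nonempty_of_continuous hf
  exact ⟨D.toTwinnedSeq, TwinnedSeq.exists_conjugacy_of_factor hf CellScheme.continuous_limitPoint
    CellScheme.limitPoint_surjective CellScheme.limEF_iff_limitPoint_eq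
    fun _ _ => CellScheme.map_limitPoint_of_limEG⟩
end
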